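/- arXiv:2110.11255 — 4 statements merged into one kernel-verified Lean document; each statement's English description precedes it below -/
import Mathlib

section
/- Let μ̃ be atomless and assume the spectral locus is convex. Let F be the family of normalized cyclic step functions. Then int T ⊆ { c(f) : f ∈ F }; in particular the closure of c(F) equals the closure of T. -/
open MeasureTheory Set Real

noncomputable section

abbrev E3 := EuclideanSpace ℝ (Fin 3)

/-- The affine hyperplane `A = {x ∈ ℝ³ : x₁ + x₂ + x₃ = 1}`. -/
def planeA : Set E3 := {x | x 0 + x 1 + x 2 = 1}

/-- The standard 2-simplex `Δ²`. -/
def simplex2 : Set E3 := {x | (∀ i, 0 ≤ x i) ∧ x 0 + x 1 + x 2 = 1}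

/-- Interior relative to the affine hyperplane `A` (for subsets of `A`). -/
def intA (s : Set E3) : Set E3 :=
  {x | x ∈ planeA ∧ ∃ U : Set E3, IsOpen U ∧ x ∈ U ∧ U ∩ planeA ⊆ s}

/-- Closure relative to the affine hyperplane `A` (for subsets of `A`). -/
def closA (s : Set E3) : Set E3 :=
  {x | x ∈ planeA ∧ ∀ U : Set E3, IsOpen U → x ∈ U → (U ∩ planeA ∩ s).Nonempty}

/-- Boundary relative to the affine hyperplane `A` (for subsets of `A`). -/
def frontA (s : Set E3) : Set E3 := closA s \ intA s

/-- The color triangle `T = conv(η([0,1]))`. -/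
def colorTri (η : ℝ → E3) : Set E3 := convexHull ℝ (η '' Icc 0 1)

/-- The cyclic interval `[a,b]_𝕋 ⊆ [0,1]`. -/
def cycIcc (a b : ℝ) : Set ℝ := if a ≤ b then Icc a b else Icc a 1 ∪ Icc 0 b

/-- The color of a spectral density `f` w.r.t. the reference measure `mu`:
`c(f) = ∫_{[0,1]} f(λ) • η(λ) dμ̃(λ)`. -/
def colorOf (mu : Measure ℝ) (η : ℝ → E3) (f : ℝ → ℝ) : E3 :=
  ∫ lam in Icc (0:ℝ) 1, f lam • η lam ∂mu

/-- The spectral locus is convex: `η([0,1]) ⊆ ∂T` and from each interior point of `T` the locus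
is seen under a continuous monotone angle `θ_c` with total variation at most `2π`, where the
angle is measured in the fixed orthonormal frame `(u, v)` of the direction plane of `A`. -/
def IsConvexLocus (η : ℝ → E3) (u v : E3) : Prop :=
  η '' Icc 0 1 ⊆ frontA (colorTri η) ∧
  ∀ c ∈ intA (colorTri η), ∃ θ : ℝ → ℝ,
    ContinuousOn θ (Icc 0 1) ∧
    (MonotoneOn θ (Icc 0 1) ∨ AntitoneOn θ (Icc 0 1)) ∧
    |θ 1 - θ 0| ≤ 2 * π ∧
    ∀ lam ∈ Icc (0:ℝ) 1,
      η lam - c = ‖η lam - c‖ • (Real.cos (θ lam) • u + Real.sin (θ lam) • v)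

/-- The spectral locus is strictly convex: convex, and moreover `η(λ)` does not lie on the chord
`[η(a), η(b)]` for pairwise distinct `a, b, λ ∈ [0,1]`. -/
def IsStrictConvexLocus (η : ℝ → E3) (u v : E3) : Prop :=
  IsConvexLocus η u v ∧
  ∀ a ∈ Icc (0:ℝ) 1, ∀ b ∈ Icc (0:ℝ) 1, ∀ lam ∈ Icc (0:ℝ) 1,
    a ≠ b → b ≠ lam → a ≠ lam → η lam ∉ segment ℝ (η a) (η b)

/-- The cyclic interval of length `δ` starting at `s` (the set `[s, {s+δ}]_𝕋 ⊆ [0,1]`). -/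
def stepSet (s δ : ℝ) : Set ℝ :=
  if s + δ ≤ 1 then Icc s (s + δ) else Icc s 1 ∪ Icc 0 (s + δ - 1)

/-- The normalized cyclic step function `f_{s,δ} = 1_{[s,{s+δ}]_𝕋} / μ̃([s,{s+δ}]_𝕋)`. -/
def stepFun (mu : Measure ℝ) (s δ : ℝ) : ℝ → ℝ :=
  fun lam => (stepSet s δ).indicator (fun _ => (1:ℝ)) lam / (mu (stepSet s δ)).toReal

/-- The family of normalized cyclic step functions. -/
def stepFam (mu : Measure ℝ) : Set (ℝ → ℝ) :=
  {f : ℝ → ℝ | ∃ s ∈ Icc (0:ℝ) 1, ∃ δ ∈ Ioc (0:ℝ) 1, f = stepFun mu s δ}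

namespace SFC

lemma stepSet_subset {s δ : ℝ} (hs : s ∈ Icc (0:ℝ) 1) (hδ : δ ∈ Ioc (0:ℝ) 1) :
    stepSet s δ ⊆ Icc 0 1 := by
  unfold stepSet
  split_ifs with h
  · exact Icc_subset_Icc hs.1 h
  · exact union_subset (Icc_subset_Icc hs.1 le_rfl)
      (Icc_subset_Icc le_rfl (by linarith [hδ.2, hs.2]))

lemma stepSet_meas (s δ : ℝ) : MeasurableSet (stepSet s δ) := by
  unfold stepSet
  split_ifs with h
  · exact measurableSet_Icc
  · exact measurableSet_Icc.union measurableSet_Icc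

variable {mu : Measure ℝ}

lemma measure_stepSet_pos (hsupp : ∀ a b : ℝ, 0 ≤ a → a < b → b ≤ 1 → 0 < mu (Icc a b))
    {s δ : ℝ} (hs : s ∈ Icc (0:ℝ) 1) (hδ : δ ∈ Ioc (0:ℝ) 1) : 0 < mu (stepSet s δ) := by
  unfold stepSet
  split_ifs with h
  · exact hsupp s (s + δ) hs.1 (by linarith [hδ.1]) h
  · rcases lt_or_eq_of_le hs.2 with h1 | h1
    · calc 0 < mu (Icc s 1) := hsupp s 1 hs.1 h1 le_rfl
        _ ≤ mu (Icc s 1 ∪ Icc 0 (s + δ - 1)) := measure_mono subset_union_left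
    · have h2 : 0 < mu (Icc 0 (s + δ - 1)) :=
        hsupp 0 (s + δ - 1) le_rfl (by linarith [hδ.1]) (by linarith [hδ.2])
      exact h2.trans_le (measure_mono subset_union_right)

/-- positivity of an integral of a nonneg function positive at one interior point -/
lemma integral_pos_pt [IsFiniteMeasure mu]
    (hsupp : ∀ a b : ℝ, 0 ≤ a → a < b → b ≤ 1 → 0 < mu (Icc a b))
    {g : ℝ → ℝ} (hg : ContinuousOn g (Icc 0 1)) {s t m : ℝ}
    (h0 : 0 ≤ s) (hst : s < t) (ht : t ≤ 1)
    (hnn : ∀ x ∈ Ioc s t, 0 ≤ g x) (hm : m ∈ Ioo s t) (hgm : 0 < g m) :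
    0 < ∫ x in Ioc s t, g x ∂mu := by
  have hmI : m ∈ Icc (0:ℝ) 1 := ⟨h0.trans hm.1.le, hm.2.le.trans ht⟩
  have hcw : ContinuousWithinAt g (Icc 0 1) m := hg m hmI
  have hev : g ⁻¹' (Ioi (g m / 2)) ∈ nhdsWithin m (Icc 0 1) :=
    hcw (Ioi_mem_nhds (half_lt_self hgm))
  rw [mem_nhdsWithin] at hev
  obtain ⟨V, hVopen, hmV, hVsub⟩ := hev
  obtain ⟨ε, hε, hball⟩ := Metric.isOpen_iff.mp hVopen m hmV
  set p := max (m - ε/2) ((s+m)/2) with hp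
  set q := min (m + ε/2) ((m+t)/2) with hq
  have hsp : s < p := lt_max_of_lt_right (by linarith [hm.1])
  have hpm : p < m := max_lt (by linarith) (by linarith [hm.1])
  have hmq : m < q := lt_min (by linarith) (by linarith [hm.2])
  have hqt : q ≤ t := le_trans (min_le_right _ _) (by linarith [hm.2])
  have hsub2 : Icc p q ⊆ Icc 0 1 := Icc_subset_Icc (by linarith) (by linarith)
  have hsubB : Icc p q ⊆ V := by
    intro x hx
    apply hball
    rw [Metric.mem_ball, Real.dist_eq, abs_lt]
    constructor
    · have := hx.1; have : m - ε/2 ≤ x := le_trans (le_max_left _ _) hx.1; linarith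
    · have : x ≤ m + ε/2 := le_trans hx.2 (min_le_left _ _); linarith
  have hgbig : ∀ x ∈ Icc p q, g m / 2 ≤ g x := by
    intro x hx
    have : x ∈ g ⁻¹' (Ioi (g m / 2)) := hVsub ⟨hsubB hx, hsub2 hx⟩
    exact (le_of_lt this)
  have hint : IntegrableOn g (Ioc s t) mu := by
    have : IntegrableOn g (Icc 0 1) mu := hg.integrableOn_Icc
    exact this.mono_set (fun x hx => ⟨h0.trans hx.1.le, hx.2.trans ht⟩)
  have hintpq : IntegrableOn g (Icc p q) mu :=
    hint.mono_set (fun x hx => ⟨hsp.trans_le hx.1, hx.2.trans hqt⟩)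
  have hmono : ∫ x in Icc p q, g x ∂mu ≤ ∫ x in Ioc s t, g x ∂mu := by
    refine setIntegral_mono_set hint ?_ ?_
    · exact (ae_restrict_iff' measurableSet_Ioc).2 (ae_of_all _ hnn)
    · exact HasSubset.Subset.eventuallyLE (fun x hx => ⟨hsp.trans_le hx.1, hx.2.trans hqt⟩)
  have hge : g m / 2 * (mu (Icc p q)).toReal ≤ ∫ x in Icc p q, g x ∂mu :=
    setIntegral_ge_of_const_le_real measurableSet_Icc (measure_ne_top mu _) hgbig hintpq
  have hμpos : 0 < (mu (Icc p q)).toReal := by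
    refine ENNReal.toReal_pos (hsupp p q (by linarith) (hpm.trans hmq) (by linarith)).ne'
      (measure_ne_top mu _)
  have : 0 < g m / 2 * (mu (Icc p q)).toReal := mul_pos (half_pos hgm) hμpos
  linarith



variable {mu : Measure ℝ}

/-- primitive -/
def prim (mu : Measure ℝ) (g : ℝ → ℝ) (t : ℝ) : ℝ := ∫ u in Icc 0 t, g u ∂mu

lemma prim_cont [NullSingletonClass mu] {g : ℝ → ℝ} (hg : IntegrableOn g (Icc 0 1) mu) :
    ContinuousOn (prim mu g) (Icc 0 1) :=
  intervalIntegral.continuousOn_primitive_Icc hg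

lemma prim_zero (g : ℝ → ℝ) [NullSingletonClass mu] : prim mu g 0 = 0 := by
  unfold prim
  rw [Icc_self, show mu.restrict {(0:ℝ)} = 0 from Measure.restrict_eq_zero.2 (measure_singleton 0)]
  simp

lemma prim_seg [NullSingletonClass mu] {g : ℝ → ℝ} (hg : IntegrableOn g (Icc 0 1) mu) {s t : ℝ}
    (h0 : 0 ≤ s) (hst : s ≤ t) (ht : t ≤ 1) :
    prim mu g t - prim mu g s = ∫ u in Ioc s t, g u ∂mu := by
  have hu : Icc (0:ℝ) s ∪ Ioc s t = Icc 0 t := Icc_union_Ioc_eq_Icc h0 hst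
  have hdisj : Disjoint (Icc (0:ℝ) s) (Ioc s t) := by
    rw [Set.disjoint_left]; rintro x ⟨_, h1⟩ ⟨h2, _⟩; linarith
  have hi1 : IntegrableOn g (Icc 0 s) mu := hg.mono_set (Icc_subset_Icc le_rfl (hst.trans ht))
  have hi2 : IntegrableOn g (Ioc s t) mu :=
    hg.mono_set (fun x hx => ⟨h0.trans hx.1.le, hx.2.trans ht⟩)
  have := setIntegral_union hdisj measurableSet_Ioc hi1 hi2 (f := g) (μ := mu)
  rw [hu] at this
  unfold prim
  rw [this]; ring

/-- continuous inverse of a strictly monotone continuous function on a compact interval -/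
lemma inv_cont {f : ℝ → ℝ} {p q : ℝ} (hpq : p ≤ q)
    (hc : ContinuousOn f (Icc p q)) (hm : StrictMonoOn f (Icc p q)) :
    ∃ g : ℝ → ℝ, ContinuousOn g (Icc (f p) (f q)) ∧
      MonotoneOn g (Icc (f p) (f q)) ∧
      (∀ k ∈ Icc (f p) (f q), g k ∈ Icc p q ∧ f (g k) = k) := by
  have himage : f '' Icc p q = Icc (f p) (f q) := by
    apply Subset.antisymm
    · rintro _ ⟨x, hx, rfl⟩
      exact ⟨hm.monotoneOn (left_mem_Icc.2 hpq) hx hx.1, hm.monotoneOn hx (right_mem_Icc.2 hpq) hx.2⟩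
    · exact intermediate_value_Icc hpq hc
  -- the bijection between subtypes
  have hmapsto : ∀ x : Icc p q, f x ∈ Icc (f p) (f q) := by
    intro x; rw [← himage]; exact mem_image_of_mem f x.2
  set F : Icc p q → Icc (f p) (f q) := fun x => ⟨f x, hmapsto x⟩ with hF
  have hFinj : Function.Injective F := by
    intro x y hxy
    have : f x = f y := congrArg Subtype.val hxy
    exact Subtype.ext (hm.injOn x.2 y.2 this)
  have hFsurj : Function.Surjective F := by
    rintro ⟨k, hk⟩
    rw [← himage] at hk
    obtain ⟨x, hx, hfx⟩ := hk
    exact ⟨⟨x, hx⟩, Subtype.ext hfx⟩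
  set E : Icc p q ≃ Icc (f p) (f q) := Equiv.ofBijective F ⟨hFinj, hFsurj⟩ with hE
  have hcont : Continuous E := by
    rw [hE]
    refine Continuous.subtype_mk ?_ _
    exact continuousOn_iff_continuous_restrict.mp hc
  haveI : CompactSpace (Icc p q) := isCompact_iff_compactSpace.mp isCompact_Icc
  set H : Icc p q ≃ₜ Icc (f p) (f q) := Continuous.homeoOfEquivCompactToT2 (f := E) hcont
  by_cases hne : f p ≤ f q
  · set g : ℝ → ℝ := fun k => if h : k ∈ Icc (f p) (f q) then (H.symm ⟨k, h⟩ : ℝ) else p with hg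
    have hgval : ∀ k (h : k ∈ Icc (f p) (f q)), g k = (H.symm ⟨k, h⟩ : ℝ) := by
      intro k h; rw [hg]; simp [h]
    have hginv : ∀ k ∈ Icc (f p) (f q), g k ∈ Icc p q ∧ f (g k) = k := by
      intro k hk
      rw [hgval k hk]
      refine ⟨(H.symm ⟨k, hk⟩).2, ?_⟩
      have := H.apply_symm_apply ⟨k, hk⟩
      have h2 : F (H.symm ⟨k, hk⟩) = ⟨k, hk⟩ := this
      exact congrArg Subtype.val h2
    refine ⟨g, ?_, ?_, hginv⟩
    · rw [continuousOn_iff_continuous_restrict]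
      have : (Icc (f p) (f q)).domRestrict g = fun k => (H.symm k : ℝ) := by
        funext k; exact hgval k k.2
      rw [this]
      exact continuous_subtype_val.comp H.symm.continuous
    · intro k hk k' hk' hkk'
      by_contra hcon
      push_neg at hcon
      have h1 := (hginv k hk); have h2 := (hginv k' hk')
      have := hm h2.1 h1.1 hcon
      rw [h1.2, h2.2] at this
      exact absurd hkk' (not_le.2 this)
  · refine ⟨fun _ => p, ?_, ?_, ?_⟩ <;>
      simp [Icc_eq_empty hne, continuousOn_empty, MonotoneOn]

/-- the target: some cyclic step set annihilates both integrands -/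
def Concl (mu : Measure ℝ) (a b : ℝ → ℝ) : Prop :=
  ∃ s ∈ Icc (0:ℝ) 1, ∃ δ ∈ Ioc (0:ℝ) 1,
    (∫ x in stepSet s δ, a x ∂mu) = 0 ∧ (∫ x in stepSet s δ, b x ∂mu) = 0

lemma sol_plain [NullSingletonClass mu] {a b : ℝ → ℝ} {s t : ℝ}
    (h0 : 0 ≤ s) (hst : s < t) (ht : t ≤ 1)
    (hA : (∫ u in Ioc s t, a u ∂mu) = 0) (hB : (∫ u in Ioc s t, b u ∂mu) = 0) :
    Concl mu a b := by
  refine ⟨s, ⟨h0, by linarith⟩, t - s, ⟨by linarith, by linarith⟩, ?_, ?_⟩ <;>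
  · rw [show stepSet s (t - s) = Icc s t by
        unfold stepSet; rw [if_pos (by linarith : s + (t - s) ≤ 1)]; congr 1; ring,
      integral_Icc_eq_integral_Ioc]
    assumption

lemma sol_wrap [NullSingletonClass mu] {a b : ℝ → ℝ}
    (ha : IntegrableOn a (Icc 0 1) mu) (hb : IntegrableOn b (Icc 0 1) mu) {t' s : ℝ}
    (h0 : 0 < t') (h1 : t' < s) (hs : s ≤ 1)
    (hA : (∫ u in Ioc s 1, a u ∂mu) + (∫ u in Ioc 0 t', a u ∂mu) = 0)
    (hB : (∫ u in Ioc s 1, b u ∂mu) + (∫ u in Ioc 0 t', b u ∂mu) = 0) :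
    Concl mu a b := by
  have hs0 : 0 < s := h0.trans h1
  have hss : stepSet s (1 - s + t') = Icc s 1 ∪ Icc 0 t' := by
    unfold stepSet; rw [if_neg (by intro h; linarith)]; congr 2 <;> ring
  have hd : Disjoint (Icc s 1) (Icc 0 t') := by
    rw [Set.disjoint_left]; rintro x ⟨h2, _⟩ ⟨_, h3⟩; linarith
  have hi1 : IntegrableOn a (Icc s 1) mu := ha.mono_set (Icc_subset_Icc hs0.le le_rfl)
  have hi2 : IntegrableOn a (Icc 0 t') mu := ha.mono_set (Icc_subset_Icc le_rfl (by linarith))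
  have hi3 : IntegrableOn b (Icc s 1) mu := hb.mono_set (Icc_subset_Icc hs0.le le_rfl)
  have hi4 : IntegrableOn b (Icc 0 t') mu := hb.mono_set (Icc_subset_Icc le_rfl (by linarith))
  refine ⟨s, ⟨hs0.le, hs⟩, 1 - s + t', ⟨by linarith, by linarith⟩, ?_, ?_⟩
  · rw [hss, setIntegral_union hd measurableSet_Icc hi1 hi2,
      integral_Icc_eq_integral_Ioc, integral_Icc_eq_integral_Ioc]
    exact hA
  · rw [hss, setIntegral_union hd measurableSet_Icc hi3 hi4,
      integral_Icc_eq_integral_Ioc, integral_Icc_eq_integral_Ioc]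
    exact hB


set_option maxHeartbeats 2000000 in
lemma core (mu : Measure ℝ) [IsProbabilityMeasure mu] [NullSingletonClass mu]
    (hsupp : ∀ a b : ℝ, 0 ≤ a → a < b → b ≤ 1 → 0 < mu (Icc a b))
    (r θ : ℝ → ℝ) (hrG : Continuous r) (hθG : Continuous θ)
    (hrpos : ∀ x ∈ Icc (0:ℝ) 1, 0 < r x)
    (hmono : MonotoneOn θ (Icc 0 1))
    {l : ℝ} (hθa : θ 0 = -l) (hθb : θ 1 = l) (hl1 : π / 2 < l) (hl2 : l ≤ π)
    (hY : 0 ≤ ∫ x in Icc (0:ℝ) 1, r x * Real.sin (θ x) ∂mu) :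
    Concl mu (fun x => r x * Real.cos (θ x)) (fun x => r x * Real.sin (θ x)) := by
  have hr : ContinuousOn r (Icc 0 1) := hrG.continuousOn
  have hθc : ContinuousOn θ (Icc 0 1) := hθG.continuousOn
  have hπ := Real.pi_pos
  have hl0 : 0 < l := lt_trans (by positivity) hl1
  have h01 : (0:ℝ) ∈ Icc (0:ℝ) 1 := ⟨le_rfl, zero_le_one⟩
  have h11 : (1:ℝ) ∈ Icc (0:ℝ) 1 := ⟨zero_le_one, le_rfl⟩
  set a : ℝ → ℝ := fun x => r x * Real.cos (θ x) with ha_def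
  set b : ℝ → ℝ := fun x => r x * Real.sin (θ x) with hb_def
  have hca : ContinuousOn a (Icc 0 1) := hr.mul (Real.continuous_cos.comp_continuousOn hθc)
  have hcb : ContinuousOn b (Icc 0 1) := hr.mul (Real.continuous_sin.comp_continuousOn hθc)
  have hIa : IntegrableOn a (Icc 0 1) mu := hca.integrableOn_Icc
  have hIb : IntegrableOn b (Icc 0 1) mu := hcb.integrableOn_Icc
  have hIr : IntegrableOn r (Icc 0 1) mu := hr.integrableOn_Icc
  set xF : ℝ → ℝ := prim mu a with hxF_def
  set yF : ℝ → ℝ := prim mu b with hyF_def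
  have hxFc : ContinuousOn xF (Icc 0 1) := prim_cont hIa
  have hyFc : ContinuousOn yF (Icc 0 1) := prim_cont hIb
  have hθub : ∀ t ∈ Icc (0:ℝ) 1, θ t ≤ l := fun t ht => hθb ▸ hmono ht h11 ht.2
  have hθlb : ∀ t ∈ Icc (0:ℝ) 1, -l ≤ θ t := fun t ht => hθa ▸ hmono h01 ht ht.1
  -- the four transition points
  have hSAcl : IsClosed {t ∈ Icc (0:ℝ) 1 | θ t ≤ -π} := by
    have : {t ∈ Icc (0:ℝ) 1 | θ t ≤ -π} = Icc (0:ℝ) 1 ∩ θ ⁻¹' (Iic (-π)) := rfl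
    rw [this]
    exact hθc.preimage_isClosed_of_isClosed isClosed_Icc isClosed_Iic
  have hSAcpt : IsCompact (insert (0:ℝ) {t ∈ Icc (0:ℝ) 1 | θ t ≤ -π}) :=
    (isCompact_Icc.of_isClosed_subset hSAcl (sep_subset _ _)).insert 0
  set α := sSup (insert (0:ℝ) {t ∈ Icc (0:ℝ) 1 | θ t ≤ -π}) with hα_def
  have hαmem : α ∈ insert (0:ℝ) {t ∈ Icc (0:ℝ) 1 | θ t ≤ -π} :=
    hSAcpt.sSup_mem (insert_nonempty _ _)
  have hαcase : α = 0 ∨ (α ∈ Icc (0:ℝ) 1 ∧ θ α ≤ -π) := by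
    rcases hαmem with h | h
    · exact Or.inl h
    · exact Or.inr ⟨h.1, h.2⟩
  have hα01 : α ∈ Icc (0:ℝ) 1 := by
    rcases hαcase with h | h
    · rw [h]; exact h01
    · exact h.1
  have hαub : ∀ t ∈ Icc (0:ℝ) 1, θ t ≤ -π → t ≤ α := fun t h1 h2 =>
    le_csSup hSAcpt.bddAbove (mem_insert_of_mem _ ⟨h1, h2⟩)
  have pinA : ∀ t ∈ Icc (0:ℝ) 1, α < t → -π < θ t := by
    intro t ht h
    by_contra hc
    push_neg at hc
    exact absurd (hαub t ht hc) (not_le.2 h)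
  have pinA' : ∀ t, 0 < t → t ≤ α → θ t = -π := by
    intro t h0 hta
    rcases hαcase with h | h
    · exfalso; rw [h] at hta; linarith
    · have htI : t ∈ Icc (0:ℝ) 1 := ⟨h0.le, hta.trans h.1.2⟩
      have h1 : θ t ≤ θ α := hmono htI h.1 hta
      have h2 : -l ≤ θ t := hθlb t htI
      have := h.2
      linarith [hl2]
  have hSBcpt : IsCompact {t ∈ Icc (0:ℝ) 1 | 0 ≤ θ t} := by
    refine isCompact_Icc.of_isClosed_subset ?_ (sep_subset _ _)
    have : {t ∈ Icc (0:ℝ) 1 | 0 ≤ θ t} = Icc (0:ℝ) 1 ∩ θ ⁻¹' (Ici 0) := rfl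
    rw [this]
    exact hθc.preimage_isClosed_of_isClosed isClosed_Icc isClosed_Ici
  have hSBne : {t ∈ Icc (0:ℝ) 1 | 0 ≤ θ t}.Nonempty := ⟨1, h11, by rw [hθb]; exact hl0.le⟩
  set β := sInf {t ∈ Icc (0:ℝ) 1 | 0 ≤ θ t} with hβ_def
  have hβmem : β ∈ {t ∈ Icc (0:ℝ) 1 | 0 ≤ θ t} := hSBcpt.sInf_mem hSBne
  have hβ01 : β ∈ Icc (0:ℝ) 1 := hβmem.1
  have hβθ : 0 ≤ θ β := hβmem.2
  have hβlb : ∀ t ∈ Icc (0:ℝ) 1, 0 ≤ θ t → β ≤ t := fun t h1 h2 =>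
    csInf_le hSBcpt.bddBelow ⟨h1, h2⟩
  have pinB : ∀ t ∈ Icc (0:ℝ) 1, t < β → θ t < 0 := by
    intro t ht h
    by_contra hc
    push_neg at hc
    exact absurd (hβlb t ht hc) (not_le.2 h)
  have hβpos : 0 < β := by
    rcases eq_or_lt_of_le hβ01.1 with h | h
    · exfalso
      have : θ β = -l := by rw [← h, hθa]
      rw [this] at hβθ; linarith
    · exact h
  have hSCcpt : IsCompact {t ∈ Icc (0:ℝ) 1 | θ t ≤ 0} := by
    refine isCompact_Icc.of_isClosed_subset ?_ (sep_subset _ _)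
    have : {t ∈ Icc (0:ℝ) 1 | θ t ≤ 0} = Icc (0:ℝ) 1 ∩ θ ⁻¹' (Iic 0) := rfl
    rw [this]
    exact hθc.preimage_isClosed_of_isClosed isClosed_Icc isClosed_Iic
  have hSCne : {t ∈ Icc (0:ℝ) 1 | θ t ≤ 0}.Nonempty := ⟨0, h01, by rw [hθa]; linarith⟩
  set γ := sSup {t ∈ Icc (0:ℝ) 1 | θ t ≤ 0} with hγ_def
  have hγmem : γ ∈ {t ∈ Icc (0:ℝ) 1 | θ t ≤ 0} := hSCcpt.sSup_mem hSCne
  have hγ01 : γ ∈ Icc (0:ℝ) 1 := hγmem.1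
  have hγθ : θ γ ≤ 0 := hγmem.2
  have hγub : ∀ t ∈ Icc (0:ℝ) 1, θ t ≤ 0 → t ≤ γ := fun t h1 h2 =>
    le_csSup hSCcpt.bddAbove ⟨h1, h2⟩
  have pinC : ∀ t ∈ Icc (0:ℝ) 1, γ < t → 0 < θ t := by
    intro t ht h
    by_contra hc
    push_neg at hc
    exact absurd (hγub t ht hc) (not_le.2 h)
  have hβγ : β ≤ γ := by
    by_contra hc
    push_neg at hc
    set w := (γ + β)/2 with hw
    have hwI : w ∈ Icc (0:ℝ) 1 := ⟨by linarith [hγ01.1, hβpos], by linarith [hβ01.2, hγ01.1]⟩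
    have h1 : θ w < 0 := pinB w hwI (by rw [hw]; linarith)
    have h2 : 0 < θ w := pinC w hwI (by rw [hw]; linarith)
    linarith
  have pin0 : ∀ t ∈ Icc (0:ℝ) 1, β ≤ t → t ≤ γ → θ t = 0 := by
    intro t ht h1 h2
    have ha1 : θ t ≤ θ γ := hmono ht hγ01 h2
    have ha2 : θ β ≤ θ t := hmono hβ01 ht h1
    linarith
  have hSDcl : IsClosed {t ∈ Icc (0:ℝ) 1 | π ≤ θ t} := by
    have : {t ∈ Icc (0:ℝ) 1 | π ≤ θ t} = Icc (0:ℝ) 1 ∩ θ ⁻¹' (Ici π) := rfl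
    rw [this]
    exact hθc.preimage_isClosed_of_isClosed isClosed_Icc isClosed_Ici
  have hSDcpt : IsCompact (insert (1:ℝ) {t ∈ Icc (0:ℝ) 1 | π ≤ θ t}) :=
    (isCompact_Icc.of_isClosed_subset hSDcl (sep_subset _ _)).insert 1
  set d := sInf (insert (1:ℝ) {t ∈ Icc (0:ℝ) 1 | π ≤ θ t}) with hd_def
  have hdmem : d ∈ insert (1:ℝ) {t ∈ Icc (0:ℝ) 1 | π ≤ θ t} :=
    hSDcpt.sInf_mem (insert_nonempty _ _)
  have hdcase : d = 1 ∨ (d ∈ Icc (0:ℝ) 1 ∧ π ≤ θ d) := by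
    rcases hdmem with h | h
    · exact Or.inl h
    · exact Or.inr ⟨h.1, h.2⟩
  have hd01 : d ∈ Icc (0:ℝ) 1 := by
    rcases hdcase with h | h
    · rw [h]; exact h11
    · exact h.1
  have hd1 : d ≤ 1 := hd01.2
  have hdlb : ∀ t ∈ Icc (0:ℝ) 1, π ≤ θ t → d ≤ t := fun t h1 h2 =>
    csInf_le hSDcpt.bddBelow (mem_insert_of_mem _ ⟨h1, h2⟩)
  have pinD : ∀ t ∈ Icc (0:ℝ) 1, t < d → θ t < π := by
    intro t ht h
    by_contra hc
    push_neg at hc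
    exact absurd (hdlb t ht hc) (not_le.2 h)
  have pinπ : ∀ t, d < t → t ≤ 1 → θ t = π := by
    intro t h0 ht1
    rcases hdcase with h | h
    · exfalso; rw [h] at h0; linarith
    · have htI : t ∈ Icc (0:ℝ) 1 := ⟨h.1.1.trans h0.le, ht1⟩
      have h1 : θ d ≤ θ t := hmono h.1 htI h0.le
      have h2 : θ t ≤ l := hθub t htI
      linarith [h.2]
  have hγd : γ < d := by
    by_contra hc
    push_neg at hc
    rcases hdcase with h | h
    · have hγ1 : γ = 1 := le_antisymm hγ01.2 (h ▸ hc)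
      have : θ γ = l := by rw [hγ1, hθb]
      linarith
    · have : θ d ≤ θ γ := hmono h.1 hγ01 hc
      linarith [h.2]
  have hαβ : α < β := by
    by_contra hc
    push_neg at hc
    rcases hαcase with h | h
    · rw [h] at hc; linarith
    · have : θ β ≤ θ α := hmono hβ01 h.1 hc
      linarith [h.2]
  -- IVT points t₁ t₂
  obtain ⟨t₁, ht₁I, ht₁⟩ : ∃ t ∈ Icc (0:ℝ) 1, θ t = -(π/2) := by
    have hm : -(π/2) ∈ Icc (θ 0) (θ 1) := by rw [hθa, hθb]; exact ⟨by linarith, by linarith⟩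
    obtain ⟨t, htI, ht⟩ := intermediate_value_Icc zero_le_one hθc hm
    exact ⟨t, htI, ht⟩
  obtain ⟨t₂, ht₂I, ht₂⟩ : ∃ t ∈ Icc (0:ℝ) 1, θ t = π/2 := by
    have hm : π/2 ∈ Icc (θ 0) (θ 1) := by rw [hθa, hθb]; exact ⟨by linarith, by linarith⟩
    obtain ⟨t, htI, ht⟩ := intermediate_value_Icc zero_le_one hθc hm
    exact ⟨t, htI, ht⟩
  have hαt₁ : α < t₁ := by
    by_contra hc
    push_neg at hc
    rcases hαcase with h | h
    · have ht10 : t₁ = 0 := le_antisymm (h ▸ hc) ht₁I.1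
      rw [ht10, hθa] at ht₁; linarith
    · have : θ t₁ ≤ θ α := hmono ht₁I h.1 hc
      rw [ht₁] at this; linarith [h.2]
  have ht₁β : t₁ < β := by
    by_contra hc
    push_neg at hc
    have : θ β ≤ θ t₁ := hmono hβ01 ht₁I hc
    rw [ht₁] at this; linarith
  have hγt₂ : γ < t₂ := by
    by_contra hc
    push_neg at hc
    have : θ t₂ ≤ θ γ := hmono ht₂I hγ01 hc
    rw [ht₂] at this; linarith
  have ht₂d : t₂ < d := by
    by_contra hc
    push_neg at hc
    rcases hdcase with h | h
    · have ht21 : t₂ = 1 := le_antisymm ht₂I.2 (h ▸ hc)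
      rw [ht21, hθb] at ht₂; linarith
    · have : θ d ≤ θ t₂ := hmono h.1 ht₂I hc
      rw [ht₂] at this; linarith [h.2]
  -- strict monotone pieces of yF
  have ydec : ∀ s t : ℝ, α ≤ s → s < t → t ≤ β → yF t < yF s := by
    intro s t hs hst htb
    have hs0 : 0 ≤ s := hα01.1.trans hs
    have ht1 : t ≤ 1 := htb.trans hβ01.2
    have hseg := prim_seg hIb hs0 hst.le ht1
    have hβ0 : θ β = 0 := pin0 β hβ01 le_rfl hβγ
    have hneg : 0 < ∫ u in Ioc s t, -(b u) ∂mu := by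
      have hmm : (s+t)/2 ∈ Ioo s t := ⟨by linarith, by linarith⟩
      refine integral_pos_pt hsupp hcb.neg hs0 hst ht1 ?_ hmm ?_
      · intro x hx
        have hxI : x ∈ Icc (0:ℝ) 1 := ⟨hs0.trans hx.1.le, hx.2.trans ht1⟩
        have h1 : θ x ≤ 0 := by
          have := hmono hxI hβ01 (hx.2.trans htb); linarith
        have h2 : -π ≤ θ x := by linarith [hθlb x hxI, hl2]
        have hsin : Real.sin (θ x) ≤ 0 := by
          have := Real.sin_nonneg_of_nonneg_of_le_pi (x := -θ x) (by linarith) (by linarith)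
          rw [Real.sin_neg] at this; linarith
        have : b x ≤ 0 := mul_nonpos_iff.mpr (Or.inl ⟨(hrpos x hxI).le, hsin⟩)
        simp only [Pi.neg_apply]; linarith
      · set m := (s+t)/2 with hm
        have hmI : m ∈ Icc (0:ℝ) 1 := ⟨by linarith, by linarith⟩
        have h1 : θ m < 0 := pinB m hmI (by rw [hm]; linarith)
        have h2 : -π < θ m := pinA m hmI (by rw [hm]; linarith)
        have hsin : Real.sin (θ m) < 0 := Real.sin_neg_of_neg_of_neg_pi_lt h1 h2
        have : b m < 0 := mul_neg_of_pos_of_neg (hrpos m hmI) hsin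
        simp only [Pi.neg_apply]; linarith
    rw [integral_neg] at hneg
    linarith
  have yinc : ∀ s t : ℝ, γ ≤ s → s < t → t ≤ d → yF s < yF t := by
    intro s t hs hst htd
    have hs0 : 0 ≤ s := hγ01.1.trans hs
    have ht1 : t ≤ 1 := htd.trans hd1
    have hseg := prim_seg hIb hs0 hst.le ht1
    have hpos : 0 < ∫ u in Ioc s t, b u ∂mu := by
      have hmm : (s+t)/2 ∈ Ioo s t := ⟨by linarith, by linarith⟩
      refine integral_pos_pt hsupp hcb hs0 hst ht1 ?_ hmm ?_
      · intro x hx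
        have hxI : x ∈ Icc (0:ℝ) 1 := ⟨hs0.trans hx.1.le, hx.2.trans ht1⟩
        have h1 : 0 < θ x := pinC x hxI (lt_of_le_of_lt hs hx.1)
        have h2 : θ x ≤ π := le_trans (hθub x hxI) hl2
        have hsin : 0 ≤ Real.sin (θ x) := Real.sin_nonneg_of_nonneg_of_le_pi h1.le h2
        exact mul_nonneg (hrpos x hxI).le hsin
      · set m := (s+t)/2 with hm
        have hmI : m ∈ Icc (0:ℝ) 1 := ⟨by linarith, by linarith⟩
        have h1 : 0 < θ m := pinC m hmI (by rw [hm]; linarith)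
        have h2 : θ m < π := pinD m hmI (by rw [hm]; linarith)
        have hsin : 0 < Real.sin (θ m) := Real.sin_pos_of_pos_of_lt_pi h1 h2
        exact mul_pos (hrpos m hmI) hsin
    linarith
  have ydecW : ∀ s t : ℝ, α ≤ s → s ≤ t → t ≤ β → yF t ≤ yF s := by
    intro s t hs hst htb
    rcases eq_or_lt_of_le hst with h | h
    · rw [h]
    · exact (ydec s t hs h htb).le
  have yincW : ∀ s t : ℝ, γ ≤ s → s ≤ t → t ≤ d → yF s ≤ yF t := by
    intro s t hs hst htd
    rcases eq_or_lt_of_le hst with h | h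
    · rw [h]
    · exact (yinc s t hs h htd).le
  -- flats
  have yflat0 : ∀ t, 0 ≤ t → t ≤ α → yF t = 0 := by
    intro t h0 hta
    have hseg := prim_seg hIb le_rfl h0 (hta.trans hα01.2)
    rw [prim_zero] at hseg
    have hz : ∫ u in Ioc 0 t, b u ∂mu = 0 := by
      rw [setIntegral_congr_fun measurableSet_Ioc (g := fun _ => (0:ℝ))]
      · simp
      · intro x hx
        have : θ x = -π := pinA' x hx.1 (hx.2.trans hta)
        show b x = 0
        rw [hb_def]
        simp only []
        rw [this, Real.sin_neg, Real.sin_pi]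
        ring
    linarith
  have yflatbot : ∀ t, β ≤ t → t ≤ γ → yF t = yF β := by
    intro t hbt htg
    have hseg := prim_seg hIb (hβ01.1) hbt (htg.trans hγ01.2)
    have hz : ∫ u in Ioc β t, b u ∂mu = 0 := by
      rw [setIntegral_congr_fun measurableSet_Ioc (g := fun _ => (0:ℝ))]
      · simp
      · intro x hx
        have hxI : x ∈ Icc (0:ℝ) 1 := ⟨hβ01.1.trans hx.1.le, (hx.2.trans htg).trans hγ01.2⟩
        have : θ x = 0 := pin0 x hxI hx.1.le (hx.2.trans htg)
        show b x = 0
        rw [hb_def]; simp only []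
        rw [this, Real.sin_zero]; ring
    linarith
  have yflattop : ∀ t, d ≤ t → t ≤ 1 → yF t = yF d := by
    intro t hdt ht1
    have hseg := prim_seg hIb hd01.1 hdt ht1
    have hz : ∫ u in Ioc d t, b u ∂mu = 0 := by
      rw [setIntegral_congr_fun measurableSet_Ioc (g := fun _ => (0:ℝ))]
      · simp
      · intro x hx
        have : θ x = π := pinπ x hx.1 (hx.2.trans ht1)
        show b x = 0
        rw [hb_def]; simp only []
        rw [this, Real.sin_pi]; ring
    linarith
  -- key x values
  have hxF0 : xF 0 = 0 := prim_zero a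
  have hxFα : xF α = -(∫ u in Ioc 0 α, r u ∂mu) := by
    have hseg := prim_seg hIa le_rfl hα01.1 hα01.2
    rw [prim_zero] at hseg
    have : ∫ u in Ioc 0 α, a u ∂mu = ∫ u in Ioc 0 α, -(r u) ∂mu := by
      refine setIntegral_congr_fun measurableSet_Ioc ?_
      intro x hx
      have : θ x = -π := pinA' x hx.1 hx.2
      show a x = -r x
      rw [ha_def]; simp only []
      rw [this, Real.cos_neg, Real.cos_pi]; ring
    rw [this, integral_neg] at hseg
    linarith
  have hc₀ : 0 ≤ ∫ u in Ioc 0 α, r u ∂mu :=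
    setIntegral_nonneg measurableSet_Ioc (fun x hx => (hrpos x ⟨hx.1.le, hx.2.trans hα01.2⟩).le)
  have hxF1d : xF 1 = xF d - ∫ u in Ioc d 1, r u ∂mu := by
    have hseg := prim_seg hIa hd01.1 hd1 le_rfl
    have : ∫ u in Ioc d 1, a u ∂mu = ∫ u in Ioc d 1, -(r u) ∂mu := by
      refine setIntegral_congr_fun measurableSet_Ioc ?_
      intro x hx
      have : θ x = π := pinπ x hx.1 hx.2
      show a x = -r x
      rw [ha_def]; simp only []
      rw [this, Real.cos_pi]; ring
    rw [this, integral_neg] at hseg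
    linarith
  have hc₁ : 0 ≤ ∫ u in Ioc d 1, r u ∂mu :=
    setIntegral_nonneg measurableSet_Ioc (fun x hx => (hrpos x ⟨hd01.1.trans hx.1.le, hx.2⟩).le)
  have hcb' : xF γ - xF β = ∫ u in Ioc β γ, r u ∂mu := by
    have hseg := prim_seg hIa hβ01.1 hβγ hγ01.2
    have : ∫ u in Ioc β γ, a u ∂mu = ∫ u in Ioc β γ, r u ∂mu := by
      refine setIntegral_congr_fun measurableSet_Ioc ?_
      intro x hx
      have hxI : x ∈ Icc (0:ℝ) 1 := ⟨hβ01.1.trans hx.1.le, hx.2.trans hγ01.2⟩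
      have : θ x = 0 := pin0 x hxI hx.1.le hx.2
      show a x = r x
      rw [ha_def]; simp only []
      rw [this, Real.cos_zero]; ring
    rw [this] at hseg
    linarith
  have hcbnn : 0 ≤ xF γ - xF β := by
    rw [hcb']
    exact setIntegral_nonneg measurableSet_Ioc
      (fun x hx => (hrpos x ⟨hβ01.1.trans hx.1.le, hx.2.trans hγ01.2⟩).le)
  -- ym and Y
  have hymneg : yF β < 0 := by
    have := ydec α β le_rfl hαβ le_rfl
    rw [yflat0 α hα01.1 le_rfl] at this
    exact this
  have hYnn : 0 ≤ yF 1 := hY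
  have hyγ : yF γ = yF β := yflatbot γ hβγ le_rfl
  have hyd : yF d = yF 1 := (yflattop 1 hd1 le_rfl).symm
  have hymY : yF β ≤ yF 1 := le_trans hymneg.le hYnn
  -- inverse function τ
  have hystrict : StrictMonoOn yF (Icc γ d) := fun s hs t ht hst => yinc s t hs.1 hst ht.2
  have hsubγd : Icc γ d ⊆ Icc (0:ℝ) 1 := Icc_subset_Icc hγ01.1 hd1
  obtain ⟨τ, hτc, hτm, hτinv⟩ := inv_cont hγd.le (hyFc.mono hsubγd) hystrict
  rw [hyγ, hyd] at hτc hτm hτinv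
  have hyFβmem : yF β ∈ Icc (yF β) (yF 1) := ⟨le_rfl, hymY⟩
  have hyF1mem : yF 1 ∈ Icc (yF β) (yF 1) := ⟨hymY, le_rfl⟩
  have hτγ : τ (yF β) = γ := by
    have h1 := hτinv (yF β) hyFβmem
    refine hystrict.injOn h1.1 ⟨le_rfl, hγd.le⟩ ?_
    rw [h1.2, hyγ]
  have hτd : τ (yF 1) = d := by
    have h1 := hτinv (yF 1) hyF1mem
    refine hystrict.injOn h1.1 ⟨hγd.le, le_rfl⟩ ?_
    rw [h1.2, hyd]
  have hτstrict : ∀ k ∈ Icc (yF β) (yF 1), ∀ k' ∈ Icc (yF β) (yF 1), k < k' → τ k < τ k' := by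
    intro k hk k' hk' hkk'
    rcases eq_or_lt_of_le (hτm hk hk' hkk'.le) with h | h
    · exfalso
      have h1 := (hτinv k hk).2
      have h2 := (hτinv k' hk').2
      rw [h] at h1
      rw [h1] at h2
      exact absurd h2 (ne_of_lt hkk')
    · exact h
  have hτ_of_y : ∀ w, γ ≤ w → w ≤ d → τ (yF w) = w := by
    intro w h1 h2
    have hdom : yF w ∈ Icc (yF β) (yF 1) := by
      constructor
      · rw [← hyγ]; exact yincW γ w le_rfl h1 h2
      · rw [← hyd]; exact yincW w d h1 h2 le_rfl
    have h3 := hτinv (yF w) hdom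
    exact hystrict.injOn h3.1 ⟨h1, h2⟩ h3.2
  have hy₂mem : yF t₂ ∈ Icc (yF β) (yF 1) := by
    constructor
    · rw [← hyγ]; exact yincW γ t₂ le_rfl hγt₂.le ht₂d.le
    · rw [← hyd]; exact yincW t₂ d hγt₂.le ht₂d.le le_rfl
  have hy₂ltY : yF t₂ < yF 1 := by rw [← hyd]; exact yinc t₂ d hγt₂.le ht₂d le_rfl
  have hymlty₂ : yF β < yF t₂ := by rw [← hyγ]; exact yinc γ t₂ le_rfl hγt₂ ht₂d.le
  have hτy₂ : τ (yF t₂) = t₂ := hτ_of_y t₂ hγt₂.le ht₂d.le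
  -- sign bounds
  have Abound : ∀ s₅, γ ≤ s₅ → s₅ ≤ d → t₂ ≤ s₅ → (∫ u in Ioc s₅ d, a u ∂mu) ≤ 0 := by
    intro s₅ h1 h2 h3
    refine setIntegral_nonpos measurableSet_Ioc ?_
    intro x hx
    have hxI : x ∈ Icc (0:ℝ) 1 := ⟨(hγ01.1.trans h1).trans hx.1.le, hx.2.trans hd1⟩
    have ha1 : π/2 ≤ θ x := by
      have := hmono ht₂I hxI ((h3.trans hx.1.le))
      rw [ht₂] at this; exact this
    have ha2 : θ x ≤ π + π/2 := by linarith [hθub x hxI, hl2]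
    have hcos : Real.cos (θ x) ≤ 0 := Real.cos_nonpos_of_pi_div_two_le_of_le ha1 ha2
    exact mul_nonpos_iff.mpr (Or.inl ⟨(hrpos x hxI).le, hcos⟩)
  have A'bound : ∀ q, γ ≤ q → q ≤ t₂ → 0 ≤ ∫ u in Ioc γ q, a u ∂mu := by
    intro q h1 h2
    refine setIntegral_nonneg measurableSet_Ioc ?_
    intro x hx
    have hxI : x ∈ Icc (0:ℝ) 1 := ⟨hγ01.1.trans hx.1.le, (hx.2.trans h2).trans ht₂I.2⟩
    have ha1 : 0 < θ x := pinC x hxI hx.1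
    have ha2 : θ x ≤ π/2 := by
      have := hmono hxI ht₂I (hx.2.trans h2)
      rw [ht₂] at this; exact this
    have hcos : 0 ≤ Real.cos (θ x) := Real.cos_nonneg_of_mem_Icc ⟨by linarith, ha2⟩
    exact mul_nonneg (hrpos x hxI).le hcos
  have Bbound : ∀ w, w ≤ t₁ → (∫ u in Ioc α w, a u ∂mu) ≤ 0 := by
    intro w hw
    refine setIntegral_nonpos measurableSet_Ioc ?_
    intro x hx
    have hxI : x ∈ Icc (0:ℝ) 1 := ⟨hα01.1.trans hx.1.le, (hx.2.trans hw).trans ht₁I.2⟩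
    have ha1 : θ x ≤ -(π/2) := by
      have := hmono hxI ht₁I (hx.2.trans hw)
      rw [ht₁] at this; exact this
    have ha2 : -π < θ x := pinA x hxI hx.1
    have hcos : Real.cos (θ x) ≤ 0 := by
      have h5 : Real.cos (θ x) = Real.cos (-θ x) := (Real.cos_neg _).symm
      rw [h5]
      exact Real.cos_nonpos_of_pi_div_two_le_of_le (by linarith) (by linarith)
    exact mul_nonpos_iff.mpr (Or.inl ⟨(hrpos x hxI).le, hcos⟩)
  have B'bound : ∀ w, t₁ ≤ w → w ≤ β → 0 ≤ ∫ u in Ioc w β, a u ∂mu := by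
    intro w h1 h2
    refine setIntegral_nonneg measurableSet_Ioc ?_
    intro x hx
    have hxI : x ∈ Icc (0:ℝ) 1 := ⟨(ht₁I.1.trans h1).trans hx.1.le, (hx.2.trans hβ01.2)⟩
    have ha1 : -(π/2) ≤ θ x := by
      have := hmono ht₁I hxI (h1.trans hx.1.le)
      rw [ht₁] at this; exact this
    have ha2 : θ x ≤ 0 := by
      have hβ0 : θ β = 0 := pin0 β hβ01 le_rfl hβγ
      have := hmono hxI hβ01 hx.2
      linarith
    have hcos : 0 ≤ Real.cos (θ x) := Real.cos_nonneg_of_mem_Icc ⟨ha1, by linarith⟩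
    exact mul_nonneg (hrpos x hxI).le hcos
  -- main case analysis
  by_cases hP : xF 1 = 0 ∧ yF 1 = 0
  · refine ⟨0, h01, 1, ⟨zero_lt_one, le_rfl⟩, ?_, ?_⟩
    · rw [show stepSet 0 1 = Icc 0 1 by unfold stepSet; rw [if_pos (by norm_num)]; norm_num]
      exact hP.1
    · rw [show stepSet 0 1 = Icc 0 1 by unfold stepSet; rw [if_pos (by norm_num)]; norm_num]
      exact hP.2
  -- helper map facts for chord functions
  have hydom : ∀ w, α ≤ w → w ≤ β → yF β ≤ yF w ∧ yF w ≤ 0 := by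
    intro w h1 h2
    constructor
    · exact ydecW w β h1 h2 le_rfl
    · rw [← yflat0 α hα01.1 le_rfl]
      exact ydecW α w le_rfl h1 h2
  have hwdom : ∀ w, α ≤ w → w ≤ β → yF w + yF 1 ∈ Icc (yF β) (yF 1) := by
    intro w h1 h2
    obtain ⟨ha1, ha2⟩ := hydom w h1 h2
    exact ⟨by linarith, by linarith⟩
  have hsubαβ : Icc α β ⊆ Icc (0:ℝ) 1 := Icc_subset_Icc hα01.1 hβ01.2
  have hEEc : ContinuousOn (fun w => xF (τ (yF w + yF 1)) - xF w) (Icc α β) := by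
    have h1 : ContinuousOn (fun w => yF w + yF 1) (Icc α β) :=
      (hyFc.mono hsubαβ).add continuousOn_const
    have h2 : ContinuousOn (fun w => τ (yF w + yF 1)) (Icc α β) :=
      hτc.comp h1 (fun w hw => hwdom w hw.1 hw.2)
    have h3 : ContinuousOn (fun w => xF (τ (yF w + yF 1))) (Icc α β) :=
      hxFc.comp h2 (fun w hw => hsubγd ((hτinv _ (hwdom w hw.1 hw.2)).1))
    exact h3.sub (hxFc.mono hsubαβ)
  -- CASE 1
  by_cases h1 : xF (τ (yF β + yF 1)) - xF β < xF 1
  · -- find t₅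
    obtain ⟨t₅, hαt₅, ht₅t₁, hy₅⟩ : ∃ t₅, α < t₅ ∧ t₅ ≤ t₁ ∧ yF t₂ - yF 1 ≤ yF t₅ := by
      rcases le_or_gt (yF t₂ - yF 1) (yF t₁) with hcc | hcc
      · exact ⟨t₁, hαt₁, le_rfl, hcc⟩
      · have hsub : Icc α t₁ ⊆ Icc (0:ℝ) 1 := Icc_subset_Icc hα01.1 ht₁I.2
        have hivt := intermediate_value_Icc' hαt₁.le (hyFc.mono hsub)
        have hmem : yF t₂ - yF 1 ∈ Icc (yF t₁) (yF α) := by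
          rw [yflat0 α hα01.1 le_rfl]
          exact ⟨hcc.le, by linarith [hy₂ltY]⟩
        obtain ⟨t₅, ht₅I, ht₅⟩ := hivt hmem
        refine ⟨t₅, ?_, ht₅I.2, ht₅.ge⟩
        rcases eq_or_lt_of_le ht₅I.1 with h | h
        · exfalso
          rw [← h, yflat0 α hα01.1 le_rfl] at ht₅
          linarith [hy₂ltY]
        · exact h
    have ht₅β : t₅ < β := lt_of_le_of_lt ht₅t₁ ht₁β
    have ht₅dom : yF t₅ + yF 1 ∈ Icc (yF β) (yF 1) := hwdom t₅ hαt₅.le ht₅β.le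
    have hs₅I : τ (yF t₅ + yF 1) ∈ Icc γ d := (hτinv _ ht₅dom).1
    have hs₅y : yF (τ (yF t₅ + yF 1)) = yF t₅ + yF 1 := (hτinv _ ht₅dom).2
    have ht₂s₅ : t₂ ≤ τ (yF t₅ + yF 1) := by
      rw [← hτy₂]
      exact hτm hy₂mem ht₅dom (by linarith)
    have hA := Abound (τ (yF t₅ + yF 1)) hs₅I.1 hs₅I.2 ht₂s₅
    have hB := Bbound t₅ ht₅t₁
    have e1 : xF d - xF (τ (yF t₅ + yF 1)) = ∫ u in Ioc (τ (yF t₅ + yF 1)) d, a u ∂mu :=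
      prim_seg hIa (hγ01.1.trans hs₅I.1) hs₅I.2 hd1
    have e2 : xF t₅ - xF α = ∫ u in Ioc α t₅, a u ∂mu :=
      prim_seg hIa hα01.1 hαt₅.le (ht₅β.le.trans hβ01.2)
    have hEEt₅ : xF 1 ≤ xF (τ (yF t₅ + yF 1)) - xF t₅ := by
      have h9 : xF α = -(∫ u in Ioc 0 α, r u ∂mu) := hxFα
      have h8 : xF 1 = xF d - ∫ u in Ioc d 1, r u ∂mu := hxF1d
      linarith
    -- IVT for EE on [t₅, β]
    have hsub5 : Icc t₅ β ⊆ Icc α β := Icc_subset_Icc hαt₅.le le_rfl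
    have hivt2 := intermediate_value_Icc' ht₅β.le (hEEc.mono hsub5)
    have hmem2 : xF 1 ∈ Icc (xF (τ (yF β + yF 1)) - xF β) (xF (τ (yF t₅ + yF 1)) - xF t₅) :=
      ⟨h1.le, hEEt₅⟩
    obtain ⟨w, hwI, hw⟩ := hivt2 hmem2
    replace hw : xF (τ (yF w + yF 1)) - xF w = xF 1 := hw
    have hαw : α < w := lt_of_lt_of_le hαt₅ hwI.1
    have hwβ : w < β := by
      rcases eq_or_lt_of_le hwI.2 with h | h
      · exfalso; rw [h] at hw; linarith
      · exact h
    have hwdom' : yF w + yF 1 ∈ Icc (yF β) (yF 1) := hwdom w hαw.le hwβ.le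
    have hswI : τ (yF w + yF 1) ∈ Icc γ d := (hτinv _ hwdom').1
    have hswy : yF (τ (yF w + yF 1)) = yF w + yF 1 := (hτinv _ hwdom').2
    have hw0 : 0 < w := lt_of_le_of_lt hα01.1 hαw
    have hwsw : w < τ (yF w + yF 1) := lt_of_lt_of_le (lt_of_lt_of_le hwβ hβγ) hswI.1
    have hsw1 : τ (yF w + yF 1) ≤ 1 := hswI.2.trans hd1
    refine sol_wrap hIa hIb hw0 hwsw hsw1 ?_ ?_
    · have e3 : xF 1 - xF (τ (yF w + yF 1)) = ∫ u in Ioc (τ (yF w + yF 1)) 1, a u ∂mu :=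
        prim_seg hIa (hγ01.1.trans hswI.1) hsw1 le_rfl
      have e4 : xF w - xF 0 = ∫ u in Ioc 0 w, a u ∂mu :=
        prim_seg hIa le_rfl hw0.le (hwβ.le.trans hβ01.2)
      rw [← e3, ← e4, hxF0]
      linarith
    · have e3 : yF 1 - yF (τ (yF w + yF 1)) = ∫ u in Ioc (τ (yF w + yF 1)) 1, b u ∂mu :=
        prim_seg hIb (hγ01.1.trans hswI.1) hsw1 le_rfl
      have e4 : yF w - yF 0 = ∫ u in Ioc 0 w, b u ∂mu :=
        prim_seg hIb le_rfl hw0.le (hwβ.le.trans hβ01.2)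
      have e5 : yF 0 = 0 := prim_zero b
      rw [← e3, ← e4, e5]
      linarith [hswy]
  push_neg at h1
  -- CASE 2
  have hβdom : yF β + yF 1 ∈ Icc (yF β) (yF 1) := hwdom β hαβ.le le_rfl
  have hsBI : τ (yF β + yF 1) ∈ Icc γ d := (hτinv _ hβdom).1
  have hsBy : yF (τ (yF β + yF 1)) = yF β + yF 1 := (hτinv _ hβdom).2
  by_cases h2 : xF (τ (yF β + yF 1)) - xF γ ≤ xF 1
  · have hsub : Icc β γ ⊆ Icc (0:ℝ) 1 := Icc_subset_Icc hβ01.1 hγ01.2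
    have hivt := intermediate_value_Icc hβγ (hxFc.mono hsub)
    have hmem : xF (τ (yF β + yF 1)) - xF 1 ∈ Icc (xF β) (xF γ) := ⟨by linarith, by linarith⟩
    obtain ⟨t', ht'I, ht'⟩ := hivt hmem
    have ht'le : t' ≤ τ (yF β + yF 1) := ht'I.2.trans hsBI.1
    have ht'lt : t' < τ (yF β + yF 1) := by
      rcases eq_or_lt_of_le ht'le with h | h
      · exfalso
        have hsBγ : τ (yF β + yF 1) = γ := le_antisymm (h ▸ ht'I.2) hsBI.1
        have hY0 : yF 1 = 0 := by
          have := hsBy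
          rw [hsBγ, hyγ] at this
          linarith
        have hX0 : xF 1 = 0 := by
          rw [← h] at ht'
          linarith
        exact hP ⟨hX0, hY0⟩
      · exact h
    have ht'0 : 0 < t' := lt_of_lt_of_le hβpos ht'I.1
    have hsB1 : τ (yF β + yF 1) ≤ 1 := hsBI.2.trans hd1
    refine sol_wrap hIa hIb ht'0 ht'lt hsB1 ?_ ?_
    · have e3 : xF 1 - xF (τ (yF β + yF 1)) = ∫ u in Ioc (τ (yF β + yF 1)) 1, a u ∂mu :=
        prim_seg hIa (hγ01.1.trans hsBI.1) hsB1 le_rfl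
      have e4 : xF t' - xF 0 = ∫ u in Ioc 0 t', a u ∂mu :=
        prim_seg hIa le_rfl ht'0.le (ht'I.2.trans hγ01.2)
      rw [← e3, ← e4, hxF0]
      linarith
    · have e3 : yF 1 - yF (τ (yF β + yF 1)) = ∫ u in Ioc (τ (yF β + yF 1)) 1, b u ∂mu :=
        prim_seg hIb (hγ01.1.trans hsBI.1) hsB1 le_rfl
      have e4 : yF t' - yF 0 = ∫ u in Ioc 0 t', b u ∂mu :=
        prim_seg hIb le_rfl ht'0.le (ht'I.2.trans hγ01.2)
      have e5 : yF 0 = 0 := prim_zero b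
      have e6 : yF t' = yF β := yflatbot t' ht'I.1 ht'I.2
      rw [← e3, ← e4, e5]
      linarith [hsBy]
  push_neg at h2
  -- τ 0
  have h0dom : (0:ℝ) ∈ Icc (yF β) (yF 1) := ⟨hymneg.le, hYnn⟩
  have hτ0I : τ 0 ∈ Icc γ d := (hτinv 0 h0dom).1
  have hyτ0 : yF (τ 0) = 0 := (hτinv 0 h0dom).2
  -- CASE 3
  by_cases h3 : xF d - xF (τ 0) ≤ xF 1
  · have hY0 : 0 < yF 1 := by
      rcases eq_or_lt_of_le hYnn with h | h
      · exfalso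
        have ht1 : τ (yF β + yF 1) = γ := by
          rw [← h]
          have : yF β + 0 = yF β := by ring
          rw [this]
          exact hτγ
        have ht2 : τ (0:ℝ) = d := by
          rw [← h] at hτd
          exact hτd
        rw [ht1] at h2
        rw [ht2] at h3
        linarith
      · exact h
    -- GG on [γ, τ 0]
    have hγτ0 : γ ≤ τ 0 := hτ0I.1
    have hGdom : ∀ q, γ ≤ q → q ≤ τ 0 → yF q + yF 1 ∈ Icc (yF β) (yF 1) := by
      intro q hq1 hq2
      have hq3 : q ≤ d := hq2.trans hτ0I.2
      have hl : yF β ≤ yF q := by rw [← hyγ]; exact yincW γ q le_rfl hq1 hq3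
      have hu : yF q ≤ 0 := by rw [← hyτ0]; exact yincW q (τ 0) hq1 hq2 hτ0I.2
      exact ⟨by linarith, by linarith⟩
    have hGGc : ContinuousOn (fun q => xF (τ (yF q + yF 1)) - xF q) (Icc γ (τ 0)) := by
      have hsub : Icc γ (τ 0) ⊆ Icc (0:ℝ) 1 :=
        Icc_subset_Icc hγ01.1 (hτ0I.2.trans hd1)
      have hh1 : ContinuousOn (fun q => yF q + yF 1) (Icc γ (τ 0)) :=
        (hyFc.mono hsub).add continuousOn_const
      have hh2 : ContinuousOn (fun q => τ (yF q + yF 1)) (Icc γ (τ 0)) :=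
        hτc.comp hh1 (fun q hq => hGdom q hq.1 hq.2)
      have hh3 : ContinuousOn (fun q => xF (τ (yF q + yF 1))) (Icc γ (τ 0)) :=
        hxFc.comp hh2 (fun q hq => hsubγd ((hτinv _ (hGdom q hq.1 hq.2)).1))
      exact hh3.sub (hxFc.mono hsub)
    have hivt := intermediate_value_Icc' hγτ0 hGGc
    have hGγ : xF (τ (yF γ + yF 1)) - xF γ = xF (τ (yF β + yF 1)) - xF γ := by rw [hyγ]
    have hGτ0 : xF (τ (yF (τ 0) + yF 1)) - xF (τ 0) = xF d - xF (τ 0) := by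
      rw [hyτ0, zero_add, hτd]
    have hmem : xF 1 ∈ Icc (xF (τ (yF (τ 0) + yF 1)) - xF (τ 0)) (xF (τ (yF γ + yF 1)) - xF γ) := by
      rw [hGγ, hGτ0]
      exact ⟨h3, h2.le⟩
    obtain ⟨q, hqI, hq⟩ := hivt hmem
    replace hq : xF (τ (yF q + yF 1)) - xF q = xF 1 := hq
    have hqdom := hGdom q hqI.1 hqI.2
    have hsqI : τ (yF q + yF 1) ∈ Icc γ d := (hτinv _ hqdom).1
    have hsqy : yF (τ (yF q + yF 1)) = yF q + yF 1 := (hτinv _ hqdom).2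
    have hqd : q ≤ d := hqI.2.trans hτ0I.2
    have hydomq : yF q ∈ Icc (yF β) (yF 1) := by
      constructor
      · rw [← hyγ]; exact yincW γ q le_rfl hqI.1 hqd
      · rw [← hyd]; exact yincW q d hqI.1 hqd le_rfl
    have hqlt : q < τ (yF q + yF 1) := by
      have h5 : τ (yF q) = q := hτ_of_y q hqI.1 hqd
      have h6 : τ (yF q) < τ (yF q + yF 1) :=
        hτstrict (yF q) hydomq (yF q + yF 1) hqdom (by linarith)
      rw [h5] at h6
      exact h6
    have hq0 : 0 < q := lt_of_lt_of_le (lt_of_lt_of_le hβpos hβγ) hqI.1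
    have hsq1 : τ (yF q + yF 1) ≤ 1 := hsqI.2.trans hd1
    refine sol_wrap hIa hIb hq0 hqlt hsq1 ?_ ?_
    · have e3 : xF 1 - xF (τ (yF q + yF 1)) = ∫ u in Ioc (τ (yF q + yF 1)) 1, a u ∂mu :=
        prim_seg hIa (hγ01.1.trans hsqI.1) hsq1 le_rfl
      have e4 : xF q - xF 0 = ∫ u in Ioc 0 q, a u ∂mu :=
        prim_seg hIa le_rfl hq0.le (hqd.trans hd1)
      rw [← e3, ← e4, hxF0]
      linarith
    · have e3 : yF 1 - yF (τ (yF q + yF 1)) = ∫ u in Ioc (τ (yF q + yF 1)) 1, b u ∂mu :=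
        prim_seg hIb (hγ01.1.trans hsqI.1) hsq1 le_rfl
      have e4 : yF q - yF 0 = ∫ u in Ioc 0 q, b u ∂mu :=
        prim_seg hIb le_rfl hq0.le (hqd.trans hd1)
      have e5 : yF 0 = 0 := prim_zero b
      rw [← e3, ← e4, e5]
      linarith [hsqy]
  push_neg at h3
  -- CASE 4
  by_cases h4 : 0 ≤ xF (τ 0)
  · have hsub : Icc d 1 ⊆ Icc (0:ℝ) 1 := Icc_subset_Icc hd01.1 le_rfl
    have hivt := intermediate_value_Icc' hd1 (hxFc.mono hsub)
    have hmem : xF 1 + xF (τ 0) ∈ Icc (xF 1) (xF d) := ⟨by linarith, by linarith⟩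
    obtain ⟨s, hsI, hxs⟩ := hivt hmem
    have hτ0s : τ 0 < s := by
      rcases eq_or_lt_of_le (hτ0I.2.trans hsI.1) with h | h
      · exfalso
        have h6 : τ 0 = d := le_antisymm hτ0I.2 (h ▸ hsI.1)
        rw [← h, h6] at hxs
        rw [h6] at h3
        linarith
      · exact h
    have hτ00 : 0 < τ 0 := lt_of_lt_of_le (lt_of_lt_of_le hβpos hβγ) hτ0I.1
    refine sol_wrap hIa hIb hτ00 hτ0s hsI.2 ?_ ?_
    · have e3 : xF 1 - xF s = ∫ u in Ioc s 1, a u ∂mu :=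
        prim_seg hIa (hd01.1.trans hsI.1) hsI.2 le_rfl
      have e4 : xF (τ 0) - xF 0 = ∫ u in Ioc 0 (τ 0), a u ∂mu :=
        prim_seg hIa le_rfl hτ00.le (hτ0I.2.trans hd1)
      rw [← e3, ← e4, hxF0]
      linarith
    · have e3 : yF 1 - yF s = ∫ u in Ioc s 1, b u ∂mu :=
        prim_seg hIb (hd01.1.trans hsI.1) hsI.2 le_rfl
      have e4 : yF (τ 0) - yF 0 = ∫ u in Ioc 0 (τ 0), b u ∂mu :=
        prim_seg hIb le_rfl hτ00.le (hτ0I.2.trans hd1)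
      have e5 : yF 0 = 0 := prim_zero b
      have e6 : yF s = yF d := yflattop s hsI.1 hsI.2
      rw [← e3, ← e4, e5]
      linarith [hyd]
  push_neg at h4
  -- CASE 5 / 6
  by_cases h5 : xF (τ 0) - xF α < 0
  · -- DD IVT on [α, t₇]
    have hDDdom : ∀ w, α ≤ w → w ≤ β → yF w ∈ Icc (yF β) (yF 1) := by
      intro w hw1 hw2
      obtain ⟨ha1, ha2⟩ := hydom w hw1 hw2
      exact ⟨ha1, by linarith⟩
    have hDDc : ContinuousOn (fun w => xF (τ (yF w)) - xF w) (Icc α β) := by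
      have hh1 : ContinuousOn (fun w => yF w) (Icc α β) := hyFc.mono hsubαβ
      have hh2 : ContinuousOn (fun w => τ (yF w)) (Icc α β) :=
        hτc.comp hh1 (fun w hw => hDDdom w hw.1 hw.2)
      have hh3 : ContinuousOn (fun w => xF (τ (yF w))) (Icc α β) :=
        hxFc.comp hh2 (fun w hw => hsubγd ((hτinv _ (hDDdom w hw.1 hw.2)).1))
      exact hh3.sub (hxFc.mono hsubαβ)
    have hDDα : xF (τ (yF α)) - xF α = xF (τ 0) - xF α := by
      rw [yflat0 α hα01.1 le_rfl]
    obtain ⟨t₇, ht₁t₇, ht₇β, hy₇⟩ : ∃ t₇, t₁ ≤ t₇ ∧ t₇ < β ∧ yF t₇ ≤ yF t₂ := by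
      rcases le_or_gt (yF t₁) (yF t₂) with hcc | hcc
      · exact ⟨t₁, le_rfl, ht₁β, hcc⟩
      · have hsub7 : Icc t₁ β ⊆ Icc (0:ℝ) 1 := Icc_subset_Icc ht₁I.1 hβ01.2
        have hivt := intermediate_value_Icc' ht₁β.le (hyFc.mono hsub7)
        have hmem : yF t₂ ∈ Icc (yF β) (yF t₁) := ⟨hymlty₂.le, hcc.le⟩
        obtain ⟨t₇, ht₇I, ht₇⟩ := hivt hmem
        refine ⟨t₇, ht₇I.1, ?_, ht₇.le⟩
        rcases eq_or_lt_of_le ht₇I.2 with h | h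
        · exfalso; rw [h] at ht₇; linarith
        · exact h
    have hαt₇ : α ≤ t₇ := hαt₁.le.trans ht₁t₇
    have ht₇dom : yF t₇ ∈ Icc (yF β) (yF 1) := hDDdom t₇ hαt₇ ht₇β.le
    have hq₇I : τ (yF t₇) ∈ Icc γ d := (hτinv _ ht₇dom).1
    have hq₇y : yF (τ (yF t₇)) = yF t₇ := (hτinv _ ht₇dom).2
    have hq₇t₂ : τ (yF t₇) ≤ t₂ := by
      rw [← hτy₂]
      exact hτm ht₇dom hy₂mem hy₇
    have hDDt₇ : 0 ≤ xF (τ (yF t₇)) - xF t₇ := by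
      have hA' := A'bound (τ (yF t₇)) hq₇I.1 hq₇t₂
      have hB' := B'bound t₇ ht₁t₇ ht₇β.le
      have e1 : xF (τ (yF t₇)) - xF γ = ∫ u in Ioc γ (τ (yF t₇)), a u ∂mu :=
        prim_seg hIa hγ01.1 hq₇I.1 (hq₇I.2.trans hd1)
      have e2 : xF β - xF t₇ = ∫ u in Ioc t₇ β, a u ∂mu :=
        prim_seg hIa (hα01.1.trans hαt₇) ht₇β.le hβ01.2
      linarith [hcbnn]
    have hsub8 : Icc α t₇ ⊆ Icc α β := Icc_subset_Icc le_rfl ht₇β.le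
    have hivt := intermediate_value_Icc hαt₇ (hDDc.mono hsub8)
    have hmem : (0:ℝ) ∈ Icc (xF (τ (yF α)) - xF α) (xF (τ (yF t₇)) - xF t₇) := by
      rw [hDDα]
      exact ⟨h5.le, hDDt₇⟩
    obtain ⟨w, hwI, hw⟩ := hivt hmem
    replace hw : xF (τ (yF w)) - xF w = 0 := hw
    have hαw : α < w := by
      rcases eq_or_lt_of_le hwI.1 with h | h
      · exfalso; rw [← h, hDDα] at hw; linarith
      · exact h
    have hwβ : w < β := lt_of_le_of_lt hwI.2 ht₇β
    have hwdom'' : yF w ∈ Icc (yF β) (yF 1) := hDDdom w hαw.le hwβ.le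
    have hqwI : τ (yF w) ∈ Icc γ d := (hτinv _ hwdom'').1
    have hqwy : yF (τ (yF w)) = yF w := (hτinv _ hwdom'').2
    have hwqw : w < τ (yF w) := lt_of_lt_of_le (lt_of_lt_of_le hwβ hβγ) hqwI.1
    have hw0 : 0 ≤ w := hα01.1.trans hwI.1
    have hqw1 : τ (yF w) ≤ 1 := hqwI.2.trans hd1
    refine sol_plain hw0 hwqw hqw1 ?_ ?_
    · have e1 : xF (τ (yF w)) - xF w = ∫ u in Ioc w (τ (yF w)), a u ∂mu :=
        prim_seg hIa hw0 hwqw.le hqw1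
      linarith
    · have e1 : yF (τ (yF w)) - yF w = ∫ u in Ioc w (τ (yF w)), b u ∂mu :=
        prim_seg hIb hw0 hwqw.le hqw1
      linarith [hqwy]
  push_neg at h5
  · -- CASE 6
    have hsub : Icc (0:ℝ) α ⊆ Icc (0:ℝ) 1 := Icc_subset_Icc le_rfl hα01.2
    have hivt := intermediate_value_Icc' hα01.1 (hxFc.mono hsub)
    have hmem : xF (τ 0) ∈ Icc (xF α) (xF 0) := ⟨by linarith, by rw [hxF0]; exact h4.le⟩
    obtain ⟨t', ht'I, ht'⟩ := hivt hmem
    have ht'τ0 : t' < τ 0 :=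
      lt_of_lt_of_le (lt_of_le_of_lt ht'I.2 hαβ) (hβγ.trans hτ0I.1)
    have hτ01 : τ 0 ≤ 1 := hτ0I.2.trans hd1
    refine sol_plain ht'I.1 ht'τ0 hτ01 ?_ ?_
    · have e1 : xF (τ 0) - xF t' = ∫ u in Ioc t' (τ 0), a u ∂mu :=
        prim_seg hIa ht'I.1 ht'τ0.le hτ01
      linarith
    · have e1 : yF (τ 0) - yF t' = ∫ u in Ioc t' (τ 0), b u ∂mu :=
        prim_seg hIb ht'I.1 ht'τ0.le hτ01
      have e2 : yF t' = 0 := yflat0 t' ht'I.1 ht'I.2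
      linarith [hyτ0]




lemma preimage_reflect_Icc (p q : ℝ) : (fun t : ℝ => 1 - t) ⁻¹' Icc p q = Icc (1 - q) (1 - p) := by
  ext t
  simp only [mem_preimage, mem_Icc]
  constructor <;> intro h <;> exact ⟨by linarith [h.1, h.2], by linarith [h.1, h.2]⟩

lemma stepSet_reflect {mu : Measure ℝ} [NullSingletonClass mu] {s δ : ℝ}
    (hs : s ∈ Icc (0:ℝ) 1) (hδ : δ ∈ Ioc (0:ℝ) 1) :
    ∃ s' ∈ Icc (0:ℝ) 1, ((fun t : ℝ => 1 - t) ⁻¹' stepSet s δ : Set ℝ) =ᵐ[mu] stepSet s' δ := by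
  by_cases h : s + δ ≤ 1
  · refine ⟨1 - s - δ, ⟨by linarith, by linarith [hδ.1, hs.1]⟩, ?_⟩
    have heq : ((fun t : ℝ => 1 - t) ⁻¹' stepSet s δ : Set ℝ) = stepSet (1 - s - δ) δ := by
      unfold stepSet
      rw [if_pos h, if_pos (by linarith [hs.1] : 1 - s - δ + δ ≤ 1), preimage_reflect_Icc]
      congr 1 <;> ring
    rw [heq]
    exact Filter.EventuallyEq.rfl
  · push_neg at h
    rcases eq_or_lt_of_le hs.2 with hs1 | hs1
    · -- s = 1
      subst hs1
      refine ⟨1 - δ, ⟨by linarith [hδ.2], by linarith [hδ.1]⟩, ?_⟩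
      have heq1 : stepSet (1 - δ) δ = Icc (1 - δ) 1 := by
        unfold stepSet
        rw [if_pos (by linarith : 1 - δ + δ ≤ 1)]
        congr 1; ring
      have heq2 : ((fun t : ℝ => 1 - t) ⁻¹' stepSet 1 δ : Set ℝ)
          = Icc 0 0 ∪ Icc (1 - δ) 1 := by
        unfold stepSet
        rw [if_neg (by intro hcon; linarith [hδ.1]), preimage_union, preimage_reflect_Icc,
          preimage_reflect_Icc]
        congr 2 <;> ring
      rw [heq1, heq2]
      refine (MeasureTheory.ae_eq_set.2 ⟨?_, ?_⟩)
      · refine measure_mono_null (fun x hx => ?_) (measure_singleton (0:ℝ))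
        rcases hx.1 with h1 | h1
        · simp only [mem_singleton_iff]
          exact le_antisymm h1.2 h1.1
        · exact absurd h1 hx.2
      · rw [diff_eq_empty.2 (subset_union_right)]
        exact measure_empty
    · -- s < 1, wrap
      refine ⟨2 - s - δ, ⟨by linarith [hδ.2], by linarith⟩, ?_⟩
      have heq : ((fun t : ℝ => 1 - t) ⁻¹' stepSet s δ : Set ℝ) = stepSet (2 - s - δ) δ := by
        unfold stepSet
        rw [if_neg (by intro hcon; linarith), if_neg (by intro hcon; linarith), preimage_union,
          preimage_reflect_Icc, preimage_reflect_Icc, union_comm]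
        congr 2 <;> ring
      rw [heq]
      exact Filter.EventuallyEq.rfl

lemma core_refl (mu : Measure ℝ) [IsProbabilityMeasure mu] [NullSingletonClass mu]
    (hsupp : ∀ a b : ℝ, 0 ≤ a → a < b → b ≤ 1 → 0 < mu (Icc a b))
    (r θ : ℝ → ℝ) (hrG : Continuous r) (hθG : Continuous θ)
    (hrpos : ∀ x ∈ Icc (0:ℝ) 1, 0 < r x)
    (hmono : MonotoneOn θ (Icc 0 1))
    {l : ℝ} (hθa : θ 0 = -l) (hθb : θ 1 = l) (hl1 : π / 2 < l) (hl2 : l ≤ π) :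
    Concl mu (fun x => r x * Real.cos (θ x)) (fun x => r x * Real.sin (θ x)) := by
  rcases le_or_gt 0 (∫ x in Icc (0:ℝ) 1, r x * Real.sin (θ x) ∂mu) with hY | hY
  · exact core mu hsupp r θ hrG hθG hrpos hmono hθa hθb hl1 hl2 hY
  · -- reflect
    set e : ℝ → ℝ := fun t => 1 - t with he_def
    have heC : Continuous e := continuous_const.sub continuous_id
    have heM : Measurable e := heC.measurable
    set ν : Measure ℝ := Measure.map e mu with hν_def
    haveI : IsProbabilityMeasure ν := Measure.isProbabilityMeasure_map heM.aemeasurable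
    have hpre : ∀ p q : ℝ, e ⁻¹' Icc p q = Icc (1 - q) (1 - p) := fun p q =>
      preimage_reflect_Icc p q
    haveI : NullSingletonClass ν := by
      constructor
      intro x
      rw [hν_def, Measure.map_apply heM (measurableSet_singleton x)]
      have : e ⁻¹' {x} = {1 - x} := by
        ext t
        simp only [mem_preimage, mem_singleton_iff, he_def]
        constructor <;> intro h <;> linarith
      rw [this]
      exact measure_singleton _
    have hsupp' : ∀ a b : ℝ, 0 ≤ a → a < b → b ≤ 1 → 0 < ν (Icc a b) := by
      intro p q h1 h2 h3
      rw [hν_def, Measure.map_apply heM measurableSet_Icc, hpre]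
      exact hsupp (1 - q) (1 - p) (by linarith) (by linarith) (by linarith)
    set r' : ℝ → ℝ := fun t => r (1 - t) with hr'_def
    set θ' : ℝ → ℝ := fun t => -θ (1 - t) with hθ'_def
    have hr'G : Continuous r' := hrG.comp heC
    have hθ'G : Continuous θ' := (hθG.comp heC).neg
    have hr'pos : ∀ x ∈ Icc (0:ℝ) 1, 0 < r' x := by
      intro x hx
      exact hrpos (1 - x) ⟨by linarith [hx.2], by linarith [hx.1]⟩
    have hmono' : MonotoneOn θ' (Icc 0 1) := by
      intro s hs t ht hst
      have h1 : (1:ℝ) - t ∈ Icc (0:ℝ) 1 := ⟨by linarith [ht.2], by linarith [ht.1]⟩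
      have h2 : (1:ℝ) - s ∈ Icc (0:ℝ) 1 := ⟨by linarith [hs.2], by linarith [hs.1]⟩
      have := hmono h1 h2 (by linarith)
      simp only [hθ'_def]
      linarith
    have hθ'a : θ' 0 = -l := by simp only [hθ'_def]; rw [show (1:ℝ) - 0 = 1 by ring, hθb]
    have hθ'b : θ' 1 = l := by simp only [hθ'_def]; rw [show (1:ℝ) - 1 = 0 by ring, hθa, neg_neg]
    have hepre01 : e ⁻¹' Icc (0:ℝ) 1 = Icc (0:ℝ) 1 := by rw [hpre]; norm_num
    have hY' : 0 ≤ ∫ x in Icc (0:ℝ) 1, r' x * Real.sin (θ' x) ∂ν := by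
      have hmeas : AEStronglyMeasurable (fun x => r' x * Real.sin (θ' x)) ν :=
        (hr'G.mul (Real.continuous_sin.comp hθ'G)).aestronglyMeasurable
      rw [hν_def, setIntegral_map measurableSet_Icc hmeas heM.aemeasurable, hepre01]
      have : ∀ x, r' (e x) * Real.sin (θ' (e x)) = -(r x * Real.sin (θ x)) := by
        intro x
        simp only [hr'_def, hθ'_def, he_def, sub_sub_cancel, Real.sin_neg]
        ring
      rw [integral_congr_ae (ae_of_all _ (fun x => this x))]
      rw [integral_neg]
      linarith
    obtain ⟨s, hsI, δ, hδI, hA, hB⟩ :=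
      core ν hsupp' r' θ' hr'G hθ'G hr'pos hmono' hθ'a hθ'b hl1 hl2 hY'
    obtain ⟨s', hs'I, hae⟩ := stepSet_reflect (mu := mu) hsI hδI
    refine ⟨s', hs'I, δ, hδI, ?_, ?_⟩
    · have hmeas : AEStronglyMeasurable (fun x => r' x * Real.cos (θ' x)) ν :=
        (hr'G.mul (Real.continuous_cos.comp hθ'G)).aestronglyMeasurable
      rw [hν_def, setIntegral_map (stepSet_meas s δ) hmeas heM.aemeasurable] at hA
      have hpt : ∀ x, r' (e x) * Real.cos (θ' (e x)) = r x * Real.cos (θ x) := by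
        intro x
        simp only [hr'_def, hθ'_def, he_def, sub_sub_cancel, Real.cos_neg]
      rw [integral_congr_ae (ae_of_all _ (fun x => hpt x))] at hA
      rw [← setIntegral_congr_set hae]
      exact hA
    · have hmeas : AEStronglyMeasurable (fun x => r' x * Real.sin (θ' x)) ν :=
        (hr'G.mul (Real.continuous_sin.comp hθ'G)).aestronglyMeasurable
      rw [hν_def, setIntegral_map (stepSet_meas s δ) hmeas heM.aemeasurable] at hB
      have hpt : ∀ x, r' (e x) * Real.sin (θ' (e x)) = -(r x * Real.sin (θ x)) := by
        intro x
        simp only [hr'_def, hθ'_def, he_def, sub_sub_cancel, Real.sin_neg]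
        ring
      rw [integral_congr_ae (ae_of_all _ (fun x => hpt x)), integral_neg] at hB
      rw [← setIntegral_congr_set hae]
      linarith

lemma core_general (mu : Measure ℝ) [IsProbabilityMeasure mu] [NullSingletonClass mu]
    (hsupp : ∀ a b : ℝ, 0 ≤ a → a < b → b ≤ 1 → 0 < mu (Icc a b))
    (r θ : ℝ → ℝ) (hrG : Continuous r) (hθG : Continuous θ)
    (hrpos : ∀ x ∈ Icc (0:ℝ) 1, 0 < r x)
    (hmono : MonotoneOn θ (Icc 0 1) ∨ AntitoneOn θ (Icc 0 1))
    (hspan1 : π < |θ 1 - θ 0|) (hspan2 : |θ 1 - θ 0| ≤ 2 * π) :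
    Concl mu (fun x => r x * Real.cos (θ x)) (fun x => r x * Real.sin (θ x)) := by
  -- first reduce to the monotone case
  have main : ∀ ψ : ℝ → ℝ, Continuous ψ → MonotoneOn ψ (Icc 0 1) →
      π < ψ 1 - ψ 0 → ψ 1 - ψ 0 ≤ 2 * π →
      Concl mu (fun x => r x * Real.cos (ψ x)) (fun x => r x * Real.sin (ψ x)) := by
    intro ψ hψG hψmono hψ1 hψ2
    set m := (ψ 0 + ψ 1) / 2 with hm_def
    set l := (ψ 1 - ψ 0) / 2 with hl_def
    set ψ' : ℝ → ℝ := fun x => ψ x - m with hψ'_def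
    have hψ'G : Continuous ψ' := hψG.sub continuous_const
    have hψ'mono : MonotoneOn ψ' (Icc 0 1) := by
      intro s hs t ht hst
      have := hψmono hs ht hst
      simp only [hψ'_def]
      linarith
    have hψ'a : ψ' 0 = -l := by simp only [hψ'_def, hm_def, hl_def]; ring
    have hψ'b : ψ' 1 = l := by simp only [hψ'_def, hm_def, hl_def]; ring
    obtain ⟨s, hsI, δ, hδI, hA, hB⟩ :=
      core_refl mu hsupp r ψ' hrG hψ'G hrpos hψ'mono hψ'a hψ'b
        (by rw [hl_def]; linarith) (by rw [hl_def]; linarith)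
    have hIc : IntegrableOn (fun x => r x * Real.cos (ψ' x)) (stepSet s δ) mu :=
      ((hrG.mul (Real.continuous_cos.comp hψ'G)).integrableOn_Icc).mono_set
        (stepSet_subset hsI hδI)
    have hIs : IntegrableOn (fun x => r x * Real.sin (ψ' x)) (stepSet s δ) mu :=
      ((hrG.mul (Real.continuous_sin.comp hψ'G)).integrableOn_Icc).mono_set
        (stepSet_subset hsI hδI)
    refine ⟨s, hsI, δ, hδI, ?_, ?_⟩
    · have hpt : ∀ x, r x * Real.cos (ψ x)
          = Real.cos m * (r x * Real.cos (ψ' x)) - Real.sin m * (r x * Real.sin (ψ' x)) := by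
        intro x
        rw [show ψ x = (ψ x - m) + m by ring, Real.cos_add]
        simp only [hψ'_def]
        ring
      rw [setIntegral_congr_fun (stepSet_meas s δ) (fun x _ => hpt x)]
      rw [integral_sub (hIc.const_mul _) (hIs.const_mul _), integral_const_mul,
        integral_const_mul, hA, hB]
      ring
    · have hpt : ∀ x, r x * Real.sin (ψ x)
          = Real.sin m * (r x * Real.cos (ψ' x)) + Real.cos m * (r x * Real.sin (ψ' x)) := by
        intro x
        rw [show ψ x = (ψ x - m) + m by ring, Real.sin_add]
        simp only [hψ'_def]
        ring
      rw [setIntegral_congr_fun (stepSet_meas s δ) (fun x _ => hpt x)]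
      rw [integral_add (hIc.const_mul _) (hIs.const_mul _), integral_const_mul,
        integral_const_mul, hA, hB]
      ring
  rcases hmono with hmono | hanti
  · have h01 : θ 0 ≤ θ 1 := hmono ⟨le_rfl, zero_le_one⟩ ⟨zero_le_one, le_rfl⟩ zero_le_one
    have habs : |θ 1 - θ 0| = θ 1 - θ 0 := abs_of_nonneg (by linarith)
    exact main θ hθG hmono (by rw [← habs]; exact hspan1) (by rw [← habs]; exact hspan2)
  · set θ'' : ℝ → ℝ := fun x => -θ x with hθ''_def
    have hθ''G : Continuous θ'' := hθG.neg
    have hmono'' : MonotoneOn θ'' (Icc 0 1) := by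
      intro s hs t ht hst
      have := hanti hs ht hst
      simp only [hθ''_def]
      linarith
    have h01 : θ 1 ≤ θ 0 := hanti ⟨le_rfl, zero_le_one⟩ ⟨zero_le_one, le_rfl⟩ zero_le_one
    have habs : |θ 1 - θ 0| = θ'' 1 - θ'' 0 := by
      rw [abs_of_nonpos (by linarith)]
      simp only [hθ''_def]
      ring
    obtain ⟨s, hsI, δ, hδI, hA, hB⟩ :=
      main θ'' hθ''G hmono'' (by rw [← habs]; exact hspan1) (by rw [← habs]; exact hspan2)
    refine ⟨s, hsI, δ, hδI, ?_, ?_⟩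
    · have hpt : ∀ x, r x * Real.cos (θ x) = r x * Real.cos (θ'' x) := by
        intro x; simp only [hθ''_def, Real.cos_neg]
      rw [setIntegral_congr_fun (stepSet_meas s δ) (fun x _ => hpt x)]
      exact hA
    · have hpt : ∀ x, r x * Real.sin (θ x) = -(r x * Real.sin (θ'' x)) := by
        intro x; simp only [hθ''_def, Real.sin_neg]; ring
      rw [setIntegral_congr_fun (stepSet_meas s δ) (fun x _ => hpt x), integral_neg, hB]
      ring



lemma colorOf_stepFun {mu : Measure ℝ} [IsProbabilityMeasure mu]
    (η : ℝ → E3) (hηcont : ContinuousOn η (Icc 0 1))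
    {s δ : ℝ} (hs : s ∈ Icc (0:ℝ) 1) (hδ : δ ∈ Ioc (0:ℝ) 1) :
    colorOf mu η (stepFun mu s δ)
      = ((mu (stepSet s δ)).toReal)⁻¹ • ∫ lam in stepSet s δ, η lam ∂mu := by
  have hSsub := stepSet_subset hs hδ
  have hSmeas := stepSet_meas s δ
  unfold colorOf stepFun
  have hpt : ∀ x : ℝ, ((stepSet s δ).indicator (fun _ => (1:ℝ)) x / (mu (stepSet s δ)).toReal)
        • η x
      = ((mu (stepSet s δ)).toReal)⁻¹ • ((stepSet s δ).indicator (fun t => η t) x) := by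
    intro x
    by_cases hx : x ∈ stepSet s δ
    · rw [indicator_of_mem hx, indicator_of_mem hx, div_eq_mul_inv, one_mul]
    · rw [indicator_of_notMem hx, indicator_of_notMem hx]
      simp
  rw [setIntegral_congr_fun measurableSet_Icc (fun x _ => hpt x), integral_smul,
    setIntegral_indicator hSmeas, inter_eq_self_of_subset_right hSsub]

lemma colorOf_eq {mu : Measure ℝ} [IsProbabilityMeasure mu]
    (η : ℝ → E3) (hηcont : ContinuousOn η (Icc 0 1))
    (c u v : E3) (A B : ℝ → ℝ) (hA : Continuous A) (hB : Continuous B)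
    (hrep : ∀ lam ∈ Icc (0:ℝ) 1, η lam = c + A lam • u + B lam • v)
    {s δ : ℝ} (hs : s ∈ Icc (0:ℝ) 1) (hδ : δ ∈ Ioc (0:ℝ) 1)
    (hpos : 0 < mu (stepSet s δ))
    (hA0 : (∫ x in stepSet s δ, A x ∂mu) = 0) (hB0 : (∫ x in stepSet s δ, B x ∂mu) = 0) :
    colorOf mu η (stepFun mu s δ) = c := by
  have hSsub := stepSet_subset hs hδ
  have hSmeas := stepSet_meas s δ
  have hM : 0 < (mu (stepSet s δ)).toReal :=
    ENNReal.toReal_pos hpos.ne' (measure_ne_top mu _)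
  rw [colorOf_stepFun η hηcont hs hδ]
  have h1 : ∫ lam in stepSet s δ, η lam ∂mu
      = ∫ lam in stepSet s δ, (c + A lam • u + B lam • v) ∂mu :=
    setIntegral_congr_fun hSmeas (fun x hx => hrep x (hSsub hx))
  have hIc : IntegrableOn (fun _ : ℝ => c) (stepSet s δ) mu := by
    exact integrableOn_const (measure_ne_top mu _) enorm_ne_top
  have hIA : IntegrableOn (fun x => A x • u) (stepSet s δ) mu :=
    ((hA.integrableOn_Icc).mono_set hSsub).smul_const u
  have hIB : IntegrableOn (fun x => B x • v) (stepSet s δ) mu :=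
    ((hB.integrableOn_Icc).mono_set hSsub).smul_const v
  have e1 : ∫ lam in stepSet s δ, (c + A lam • u + B lam • v) ∂mu
      = (∫ lam in stepSet s δ, (c + A lam • u) ∂mu) + ∫ lam in stepSet s δ, B lam • v ∂mu :=
    integral_add (hIc.add hIA) hIB
  have e2 : ∫ lam in stepSet s δ, (c + A lam • u) ∂mu
      = (∫ _ in stepSet s δ, c ∂mu) + ∫ lam in stepSet s δ, A lam • u ∂mu :=
    integral_add hIc hIA
  rw [h1, e1, e2, setIntegral_const, integral_smul_const, integral_smul_const, hA0, hB0]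
  simp only [zero_smul, add_zero]
  rw [smul_smul, measureReal_def, inv_mul_cancel₀ hM.ne', one_smul]

end SFC


set_option maxHeartbeats 1000000 in
/-- if `μ̃` is atomless and the spectral locus is convex, the normalized cyclic
step functions cover the interior of the color triangle; in particular `cl c(F) = cl T`. -/
theorem step_functions_cover_interior
    (η : ℝ → E3) (hηcont : ContinuousOn η (Icc 0 1))
    (hηΔ : ∀ lam ∈ Icc (0:ℝ) 1, η lam ∈ simplex2)
    (u v : E3) (hu : ‖u‖ = 1) (hv : ‖v‖ = 1) (huv : (inner ℝ u v : ℝ) = 0)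
    (hu0 : u 0 + u 1 + u 2 = 0) (hv0 : v 0 + v 1 + v 2 = 0)
    (mu : Measure ℝ) (hprob : IsProbabilityMeasure mu)
    (hconc : mu (Icc (0:ℝ) 1)ᶜ = 0)
    (hsupp : ∀ a b : ℝ, 0 ≤ a → a < b → b ≤ 1 → 0 < mu (Icc a b))
    (hatomless : ∀ x : ℝ, mu {x} = 0)
    (hTint : (intA (colorTri η)).Nonempty)
    (hconv : IsConvexLocus η u v) :
    intA (colorTri η) ⊆ colorOf mu η '' stepFam mu ∧
    closure (colorOf mu η '' stepFam mu) = closure (colorTri η) := by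
  haveI : IsProbabilityMeasure mu := hprob
  haveI : NullSingletonClass mu := ⟨hatomless⟩
  have hplaneconv : Convex ℝ planeA := by
    intro x hx y hy p q hp hq hpq
    have hx' : x 0 + x 1 + x 2 = 1 := hx
    have hy' : y 0 + y 1 + y 2 = 1 := hy
    show (p • x + q • y) 0 + (p • x + q • y) 1 + (p • x + q • y) 2 = 1
    simp only [PiLp.add_apply, PiLp.smul_apply, smul_eq_mul]
    linear_combination p * hx' + q * hy' + hpq
  have hTplane : colorTri η ⊆ planeA := by
    apply convexHull_min ?_ hplaneconv
    rintro _ ⟨lam, hlam, rfl⟩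
    exact (hηΔ lam hlam).2
  have hTconv : Convex ℝ (colorTri η) := convex_convexHull ℝ _
  have huu : (inner ℝ u u : ℝ) = 1 := by rw [real_inner_self_eq_norm_mul_norm, hu]; norm_num
  have hvv : (inner ℝ v v : ℝ) = 1 := by rw [real_inner_self_eq_norm_mul_norm, hv]; norm_num
  have hvu : (inner ℝ v u : ℝ) = 0 := by rw [real_inner_comm]; exact huv
  have hinner2 : ∀ p q p' q' : ℝ,
      (inner ℝ (p • u + q • v) (p' • u + q' • v) : ℝ) = p * p' + q * q' := by
    intro p q p' q'
    simp only [inner_add_left, inner_add_right, real_inner_smul_left, real_inner_smul_right,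
      huu, hvv, huv, hvu]
    ring
  -- PART 1
  have part1 : intA (colorTri η) ⊆ colorOf mu η '' stepFam mu := by
    intro c hc
    obtain ⟨θ, hθcont, hθmono, hθvar, hθrep⟩ := hconv.2 c hc
    set pr : ℝ → ℝ := fun t => max 0 (min 1 t) with hpr_def
    have hprC : Continuous pr := continuous_const.max (continuous_const.min continuous_id)
    have hprI : ∀ t, pr t ∈ Icc (0:ℝ) 1 :=
      fun t => ⟨le_max_left _ _, max_le zero_le_one (min_le_left _ _)⟩
    have hprid : ∀ t ∈ Icc (0:ℝ) 1, pr t = t := by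
      intro t ht
      simp only [hpr_def]
      rw [min_eq_right ht.2, max_eq_right ht.1]
    set r : ℝ → ℝ := fun t => ‖η (pr t) - c‖ with hr_def
    set ϑ : ℝ → ℝ := fun t => θ (pr t) with hϑ_def
    have hηpr : Continuous (fun t => η (pr t)) := hηcont.comp_continuous hprC hprI
    have hrG : Continuous r := (hηpr.sub continuous_const).norm
    have hϑG : Continuous ϑ := hθcont.comp_continuous hprC hprI
    have hϑeq : ∀ t ∈ Icc (0:ℝ) 1, ϑ t = θ t := by
      intro t ht; simp only [hϑ_def]; rw [hprid t ht]
    have hreq : ∀ t ∈ Icc (0:ℝ) 1, r t = ‖η t - c‖ := by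
      intro t ht; simp only [hr_def]; rw [hprid t ht]
    have hrpos : ∀ x ∈ Icc (0:ℝ) 1, 0 < r x := by
      intro x hx
      rw [hreq x hx]
      rw [norm_pos_iff]
      intro heq
      have heq' : η x = c := by
        have := sub_eq_zero.mp heq
        exact this
      have hfront := hconv.1 (mem_image_of_mem η hx)
      rw [heq'] at hfront
      exact hfront.2 hc
    have hϑmono : MonotoneOn ϑ (Icc 0 1) ∨ AntitoneOn ϑ (Icc 0 1) := by
      rcases hθmono with h | h
      · left; intro x hx y hy hxy; rw [hϑeq x hx, hϑeq y hy]; exact h hx hy hxy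
      · right; intro x hx y hy hxy; rw [hϑeq x hx, hϑeq y hy]; exact h hx hy hxy
    have hϑ0 : ϑ 0 = θ 0 := hϑeq 0 ⟨le_rfl, zero_le_one⟩
    have hϑ1 : ϑ 1 = θ 1 := hϑeq 1 ⟨zero_le_one, le_rfl⟩
    have hsubrep : ∀ lam ∈ Icc (0:ℝ) 1, η lam - c
        = (r lam * Real.cos (ϑ lam)) • u + (r lam * Real.sin (ϑ lam)) • v := by
      intro lam hlam
      rw [hreq lam hlam, hϑeq lam hlam]
      calc η lam - c = ‖η lam - c‖ • (Real.cos (θ lam) • u + Real.sin (θ lam) • v) :=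
            hθrep lam hlam
        _ = (‖η lam - c‖ * Real.cos (θ lam)) • u + (‖η lam - c‖ * Real.sin (θ lam)) • v := by
            rw [smul_add, smul_smul, smul_smul]
    have hspan1 : π < |ϑ 1 - ϑ 0| := by
      rw [hϑ0, hϑ1]
      by_contra hcon
      push_neg at hcon
      set φ := (θ 0 + θ 1)/2 with hφ_def
      set n : E3 := Real.cos φ • u + Real.sin φ • v with hn_def
      have hbetween : ∀ lam ∈ Icc (0:ℝ) 1, |θ lam - φ| ≤ |θ 1 - θ 0| / 2 := by
        intro lam hlam
        rcases hθmono with h | h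
        · have h1 := h ⟨le_rfl, zero_le_one⟩ hlam hlam.1
          have h2 := h hlam ⟨zero_le_one, le_rfl⟩ hlam.2
          rw [abs_of_nonneg (by linarith : (0:ℝ) ≤ θ 1 - θ 0), abs_le]
          constructor <;> linarith
        · have h1 := h ⟨le_rfl, zero_le_one⟩ hlam hlam.1
          have h2 := h hlam ⟨zero_le_one, le_rfl⟩ hlam.2
          rw [abs_of_nonpos (by linarith : θ 1 - θ 0 ≤ 0), abs_le]
          constructor <;> linarith
      have hinnerpos : ∀ lam ∈ Icc (0:ℝ) 1, 0 ≤ (inner ℝ (η lam - c) n : ℝ) := by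
        intro lam hlam
        rw [hsubrep lam hlam, hn_def, hinner2]
        have hcs : r lam * Real.cos (ϑ lam) * Real.cos φ + r lam * Real.sin (ϑ lam) * Real.sin φ
            = r lam * Real.cos (ϑ lam - φ) := by rw [Real.cos_sub]; ring
        rw [hcs]
        apply mul_nonneg (hrpos lam hlam).le
        apply Real.cos_nonneg_of_mem_Icc
        have hb := hbetween lam hlam
        rw [abs_le] at hb
        rw [hϑeq lam hlam]
        constructor <;> [linarith [hb.1]; linarith [hb.2]]
      set H : Set E3 := {x | 0 ≤ (inner ℝ (x - c) n : ℝ)} with hH_def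
      have hHconv : Convex ℝ H := by
        intro x hx y hy p q hp hq hpq
        have hx' : 0 ≤ (inner ℝ (x - c) n : ℝ) := hx
        have hy' : 0 ≤ (inner ℝ (y - c) n : ℝ) := hy
        show 0 ≤ (inner ℝ (p • x + q • y - c) n : ℝ)
        have hgoal : p • x + q • y - c = p • (x - c) + q • (y - c) := by
          have h9 : p • (x - c) + q • (y - c) = p • x + q • y - (p + q) • c := by
            rw [smul_sub, smul_sub, add_smul]; abel
          rw [h9, hpq, one_smul]
        rw [hgoal, inner_add_left, real_inner_smul_left, real_inner_smul_left]
        exact add_nonneg (mul_nonneg hp hx') (mul_nonneg hq hy')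
      have hTH : colorTri η ⊆ H := by
        apply convexHull_min ?_ hHconv
        rintro _ ⟨lam, hlam, rfl⟩
        exact hinnerpos lam hlam
      obtain ⟨hcplane, U, hUopen, hcU, hUsub⟩ := hc
      obtain ⟨ε, hε, hball⟩ := Metric.isOpen_iff.mp hUopen c hcU
      set z : E3 := c - (ε/2) • n with hz_def
      have hnn : (inner ℝ n n : ℝ) = 1 := by
        rw [hn_def, hinner2]
        have := Real.sin_sq_add_cos_sq φ
        nlinarith [this]
      have hnorm_n : ‖n‖ = 1 := by
        have h2 : ‖n‖ * ‖n‖ = 1 := by rw [← real_inner_self_eq_norm_mul_norm]; exact hnn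
        nlinarith [norm_nonneg n]
      have hzU : z ∈ U := by
        apply hball
        rw [Metric.mem_ball, dist_eq_norm, hz_def,
          show c - (ε/2) • n - c = -((ε/2) • n) by abel, norm_neg, norm_smul,
          Real.norm_eq_abs, abs_of_pos (by linarith), hnorm_n]
        linarith
      have hzplane : z ∈ planeA := by
        have hc' : c 0 + c 1 + c 2 = 1 := hcplane
        show z 0 + z 1 + z 2 = 1
        have hzi : ∀ i, z i = c i - (ε/2) * (Real.cos φ * u i + Real.sin φ * v i) := by
          intro i
          simp only [hz_def, hn_def, PiLp.sub_apply, PiLp.smul_apply, PiLp.add_apply,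
            smul_eq_mul]
        rw [hzi 0, hzi 1, hzi 2]
        linear_combination hc' - (ε/2) * Real.cos φ * hu0 - (ε/2) * Real.sin φ * hv0
      have hzH : z ∈ H := hTH (hUsub ⟨hzU, hzplane⟩)
      have hzval : (inner ℝ (z - c) n : ℝ) = -(ε/2) := by
        rw [hz_def, show c - (ε/2) • n - c = -((ε/2) • n) by abel, inner_neg_left,
          real_inner_smul_left, hnn]
        ring
      have hzH' : (0:ℝ) ≤ inner ℝ (z - c) n := hzH
      rw [hzval] at hzH'
      linarith
    have hspan2 : |ϑ 1 - ϑ 0| ≤ 2 * π := by rw [hϑ0, hϑ1]; exact hθvar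
    obtain ⟨s, hsI, δ, hδI, hA0, hB0⟩ :=
      SFC.core_general mu hsupp r ϑ hrG hϑG hrpos hϑmono hspan1 hspan2
    refine ⟨stepFun mu s δ, ⟨s, hsI, δ, hδI, rfl⟩, ?_⟩
    refine SFC.colorOf_eq η hηcont c u v _ _
      (hrG.mul (Real.continuous_cos.comp hϑG)) (hrG.mul (Real.continuous_sin.comp hϑG))
      ?_ hsI hδI (SFC.measure_stepSet_pos hsupp hsI hδI) hA0 hB0
    intro lam hlam
    show η lam = c + (r lam * Real.cos (ϑ lam)) • u + (r lam * Real.sin (ϑ lam)) • v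
    have h := hsubrep lam hlam
    have h2 := sub_eq_iff_eq_add.mp h
    rw [h2]; abel
  -- PART 2
  have seg_mem : ∀ c₀ ∈ intA (colorTri η), ∀ y ∈ colorTri η, ∀ t : ℝ, 0 ≤ t → t < 1 →
      c₀ + t • (y - c₀) ∈ intA (colorTri η) := by
    intro c₀ hc₀ y hy t ht0 ht1
    obtain ⟨hc₀p, U, hUo, hc₀U, hUsub⟩ := hc₀
    have hyp : y ∈ planeA := hTplane hy
    have h1t : (1:ℝ) - t ≠ 0 := ne_of_gt (by linarith)
    refine ⟨?_, (fun x : E3 => (1 - t) • x + t • y) '' U, ?_, ⟨c₀, hc₀U, ?_⟩, ?_⟩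
    · have hc' : c₀ 0 + c₀ 1 + c₀ 2 = 1 := hc₀p
      have hy' : y 0 + y 1 + y 2 = 1 := hyp
      show (c₀ + t • (y - c₀)) 0 + (c₀ + t • (y - c₀)) 1 + (c₀ + t • (y - c₀)) 2 = 1
      simp only [PiLp.add_apply, PiLp.smul_apply, PiLp.sub_apply, smul_eq_mul]
      linear_combination hc' + t * hy' - t * hc'
    · have h2 : IsOpenMap (fun x : E3 => (1 - t) • x + t • y) := by
        have hhom : IsOpenMap (fun x : E3 => (1 - t) • x) :=
          (Homeomorph.smulOfNeZero ((1:ℝ) - t) h1t).isOpenMap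
        have hhom2 : IsOpenMap (fun x : E3 => x + t • y) :=
          (Homeomorph.addRight (t • y)).isOpenMap
        exact hhom2.comp hhom
      exact h2 U hUo
    · show (1 - t) • c₀ + t • y = c₀ + t • (y - c₀)
      rw [smul_sub, sub_smul, one_smul]
      abel
    · rintro w ⟨⟨x, hxU, rfl⟩, hwp⟩
      have hxp : x ∈ planeA := by
        have hw' : ((1 - t) • x + t • y) 0 + ((1 - t) • x + t • y) 1
            + ((1 - t) • x + t • y) 2 = 1 := hwp
        simp only [PiLp.add_apply, PiLp.smul_apply, smul_eq_mul] at hw'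
        have hy' : y 0 + y 1 + y 2 = 1 := hyp
        show x 0 + x 1 + x 2 = 1
        have h3 : (1 - t) * (x 0 + x 1 + x 2) = (1 - t) * 1 := by
          linear_combination hw' - t * hy'
        exact mul_left_cancel₀ h1t h3
      have hxT : x ∈ colorTri η := hUsub ⟨hxU, hxp⟩
      exact hTconv hxT hy (by linarith) ht0 (by ring)
  have hTclos : colorTri η ⊆ closure (intA (colorTri η)) := by
    intro y hy
    obtain ⟨c₀, hc₀⟩ := hTint
    have hcont : Continuous (fun t : ℝ => c₀ + t • (y - c₀)) :=
      continuous_const.add (continuous_id.smul continuous_const)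
    have htend : Filter.Tendsto (fun t : ℝ => c₀ + t • (y - c₀))
        (nhdsWithin 1 (Iio 1)) (nhds y) := by
      have h1 := hcont.tendsto 1
      rw [show c₀ + (1:ℝ) • (y - c₀) = y by rw [one_smul]; abel] at h1
      exact h1.mono_left nhdsWithin_le_nhds
    refine mem_closure_of_tendsto htend ?_
    have hmem : Ioo (0:ℝ) 1 ∈ nhdsWithin (1:ℝ) (Iio 1) :=
      Ioo_mem_nhdsLT_of_mem ⟨zero_lt_one, le_rfl⟩
    exact Filter.eventually_of_mem hmem (fun t ht => seg_mem c₀ hc₀ y hy t ht.1.le ht.2)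
  have himgsub : colorOf mu η '' stepFam mu ⊆ closure (colorTri η) := by
    rintro _ ⟨f, ⟨s, hsI, δ, hδI, rfl⟩, rfl⟩
    have hpos := SFC.measure_stepSet_pos hsupp hsI hδI
    have hSsub := SFC.stepSet_subset hsI hδI
    have hSmeas := SFC.stepSet_meas s δ
    rw [SFC.colorOf_stepFun η hηcont hsI hδI]
    set P : Measure ℝ := (mu (stepSet s δ))⁻¹ • mu.restrict (stepSet s δ) with hP_def
    haveI hPprob : IsProbabilityMeasure P := by
      constructor
      rw [hP_def, Measure.smul_apply, Measure.restrict_apply_univ, smul_eq_mul]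
      exact ENNReal.inv_mul_cancel hpos.ne' (measure_ne_top mu _)
    have hae : ∀ᵐ x ∂P, η x ∈ closure (colorTri η) := by
      have h1 : ∀ᵐ x ∂(mu.restrict (stepSet s δ)), x ∈ stepSet s δ := ae_restrict_mem hSmeas
      have h2 : ∀ᵐ x ∂P, x ∈ stepSet s δ := by
        rw [hP_def]
        exact Measure.ae_smul_measure h1 _
      refine h2.mono (fun x hx => ?_)
      exact subset_closure (subset_convexHull ℝ _ (mem_image_of_mem η (hSsub hx)))
    have hint : Integrable η P := by
      have h1 : IntegrableOn η (stepSet s δ) mu := (hηcont.integrableOn_Icc).mono_set hSsub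
      rw [hP_def]
      exact h1.smul_measure (ENNReal.inv_ne_top.2 hpos.ne')
    have hmean := (hTconv.closure).integral_mem isClosed_closure hae hint
    have hPint : ∫ x, η x ∂P = ((mu (stepSet s δ)).toReal)⁻¹ • ∫ lam in stepSet s δ, η lam ∂mu := by
      rw [hP_def, integral_smul_measure, ENNReal.toReal_inv]
    rw [← hPint]
    exact hmean
  refine ⟨part1, ?_⟩
  apply Subset.antisymm
  · exact closure_minimal himgsub isClosed_closure
  · calc closure (colorTri η) ⊆ closure (closure (intA (colorTri η))) := closure_mono hTclos
      _ = closure (intA (colorTri η)) := closure_closure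
      _ ⊆ closure (colorOf mu η '' stepFam mu) := closure_mono part1
end
end

section
/- Let h : ℝ → [−∞, +∞) be continuous and 1-periodic, attaining its (finite) maximum at the unique point 0 of ℝ/ℤ, and let F = {f_{s,a}} be the normalized generalized von Mises family generated by h. Then for every δ₀ ∈ (0, 1/2), sup_{s ∈ [δ₀, 1−δ₀]} ‖c(f_{s,a}) − η(s)‖₁ → 0 as a → ∞; that is, as the concentration parameter a tends to infinity, the colors of the generalized von Mises densities converge to the spectral locus, uniformly on compact subsets of (0,1). -/
open MeasureTheory Set Real

noncomputable section

/-- The ℓ¹ norm on ℝ³. -/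
def norm1 (x : E3) : ℝ := |x 0| + |x 1| + |x 2|

/-! A continuous function `h : ℝ → [−∞, +∞)` is encoded by `g = exp ∘ h : ℝ → [0, ∞)`
(`exp` is a homeomorphism `[−∞,∞) → [0,∞)`, with the convention `e^{−∞} = 0`); then
`exp (a·h(x)) = g(x) ^ a` (real power), matching the convention `0·(−∞) = 0` since `0 ^ 0 = 1`.
`h` attains a finite maximum at the unique point `0` of `ℝ/ℤ` iff `g` attains a positive
maximum at the unique point `0` of `ℝ/ℤ`. -/

/-- The normalization constant `Z(s,a) = e^{-b(s,a)} = ∫_{[0,1]} e^{a h(λ-s)} dμ̃`. -/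
def gvmZ (mu : Measure ℝ) (g : ℝ → ℝ) (s a : ℝ) : ℝ :=
  ∫ lam in Icc (0:ℝ) 1, g (lam - s) ^ a ∂mu

/-- The normalized generalized von Mises density `f_{s,a}(λ) = e^{a h(λ-s) + b(s,a)}`. -/
def gvmF (mu : Measure ℝ) (g : ℝ → ℝ) (s a : ℝ) : ℝ → ℝ :=
  fun lam => g (lam - s) ^ a / gvmZ mu g s a


/-! ### Auxiliary lemmas -/

lemma abs_eval_le_norm (x : E3) (i : Fin 3) : |x i| ≤ ‖x‖ := by
  rw [EuclideanSpace.norm_eq, ← Real.sqrt_sq_eq_abs]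
  apply Real.sqrt_le_sqrt
  have h : ‖x i‖^2 = x i ^ 2 := by rw [Real.norm_eq_abs, sq_abs]
  rw [← h]
  exact Finset.single_le_sum (fun j _ => sq_nonneg ‖x j‖) (Finset.mem_univ i)

lemma norm1_le_three_norm (x : E3) : norm1 x ≤ 3 * ‖x‖ := by
  have h0 := abs_eval_le_norm x 0
  have h1 := abs_eval_le_norm x 1
  have h2 := abs_eval_le_norm x 2
  unfold norm1; linarith

lemma simplex_coord (x : E3) (hx : x ∈ simplex2) (i : Fin 3) : x i ∈ Icc (0:ℝ) 1 := by
  obtain ⟨hnn, hsum⟩ := hx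
  refine ⟨hnn i, ?_⟩
  have h0 := hnn 0; have h1 := hnn 1; have h2 := hnn 2
  fin_cases i
  · show x 0 ≤ 1; linarith
  · show x 1 ≤ 1; linarith
  · show x 2 ≤ 1; linarith

lemma norm1_sub_le_three (x y : E3) (hx : x ∈ simplex2) (hy : y ∈ simplex2) :
    norm1 (x - y) ≤ 3 := by
  have hb : ∀ i : Fin 3, |(x - y) i| ≤ 1 := by
    intro i
    have h1 := simplex_coord x hx i
    have h2 := simplex_coord y hy i
    have h : (x - y) i = x i - y i := by simp
    rw [h, abs_le]
    constructor
    · linarith [h1.1, h2.2]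
    · linarith [h1.2, h2.1]
  have := hb 0; have := hb 1; have := hb 2
  unfold norm1; linarith

lemma norm1_integral_le {ν : Measure ℝ} {F : ℝ → E3} (hF : Integrable F ν) :
    norm1 (∫ x, F x ∂ν) ≤ ∫ x, norm1 (F x) ∂ν := by
  have hcomp : ∀ i : Fin 3, (∫ x, F x ∂ν) i = ∫ x, F x i ∂ν := by
    intro i
    have := (EuclideanSpace.proj (𝕜 := ℝ) i).integral_comp_comm hF
    simpa using this.symm
  have hci : ∀ i : Fin 3, Integrable (fun x => F x i) ν := by
    intro i
    have := ((EuclideanSpace.proj (𝕜 := ℝ) i).integrable_comp hF)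
    simpa using this
  have habs : ∀ i : Fin 3, |∫ x, F x i ∂ν| ≤ ∫ x, |F x i| ∂ν := fun i => by
    simpa [Real.norm_eq_abs] using norm_integral_le_integral_norm (μ := ν) (fun x => F x i)
  unfold norm1
  rw [hcomp 0, hcomp 1, hcomp 2]
  have hA : Integrable (fun x => |F x 0| + |F x 1|) ν := (hci 0).abs.add (hci 1).abs
  have hsum : ∫ x, (|F x 0| + |F x 1| + |F x 2|) ∂ν
      = (∫ x, |F x 0| ∂ν) + (∫ x, |F x 1| ∂ν) + (∫ x, |F x 2| ∂ν) := by
    rw [integral_add hA (hci 2).abs, integral_add (hci 0).abs (hci 1).abs]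
  rw [hsum]
  exact add_le_add (add_le_add (habs 0) (habs 1)) (habs 2)

lemma norm1_smul (r : ℝ) (y : E3) : norm1 (r • y) = |r| * norm1 y := by
  unfold norm1
  have h : ∀ i : Fin 3, (r • y) i = r * y i := fun i => rfl
  rw [h 0, h 1, h 2, abs_mul, abs_mul, abs_mul]; ring

lemma continuous_norm1 : Continuous norm1 := by
  unfold norm1
  exact ((continuous_abs.comp (EuclideanSpace.proj (𝕜 := ℝ) (0 : Fin 3)).continuous).add
    (continuous_abs.comp (EuclideanSpace.proj (𝕜 := ℝ) (1 : Fin 3)).continuous)).add (continuous_abs.comp (EuclideanSpace.proj (𝕜 := ℝ) (2 : Fin 3)).continuous)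


set_option maxHeartbeats 1600000 in
/-- as `a → ∞`, the colors of the normalized generalized von Mises densities
converge to the spectral locus, uniformly in `s` on `[δ₀, 1 − δ₀]` (in the ℓ¹ norm). -/
theorem generalized_von_mises_colors_tend_to_locus
    (η : ℝ → E3) (hηcont : ContinuousOn η (Icc 0 1))
    (hηΔ : ∀ lam ∈ Icc (0:ℝ) 1, η lam ∈ simplex2)
    (mu : Measure ℝ) (hprob : IsProbabilityMeasure mu)
    (hconc : mu (Icc (0:ℝ) 1)ᶜ = 0)
    (hsupp : ∀ a b : ℝ, 0 ≤ a → a < b → b ≤ 1 → 0 < mu (Icc a b))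
    (g : ℝ → ℝ) (hgcont : Continuous g) (hgnn : ∀ x, 0 ≤ g x)
    (hgper : Function.Periodic g 1)
    (hgmax : ∀ x, g x ≤ g 0) (hgpos : 0 < g 0)
    (hguniq : ∀ x ∈ Ico (0:ℝ) 1, g x = g 0 → x = 0) :
    ∀ δ₀ ∈ Ioo (0:ℝ) (1/2), ∀ ε : ℝ, 0 < ε →
      ∃ a₀ : ℝ, ∀ a : ℝ, a₀ ≤ a →
        ∀ s ∈ Icc δ₀ (1 - δ₀), norm1 (colorOf mu η (gvmF mu g s a) - η s) ≤ ε := by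
  haveI := hprob
  intro δ₀ hδ₀ ε hε
  obtain ⟨hδ₀pos, hδ₀half⟩ := hδ₀
  -- uniform continuity of η
  obtain ⟨δ, hδpos, hδ⟩ :=
    (Metric.uniformContinuousOn_iff.mp
      (isCompact_Icc.uniformContinuousOn_of_continuous hηcont)) (ε/12) (by positivity)
  set δ' : ℝ := min δ δ₀ / 2 with hδ'def
  have hminpos : 0 < min δ δ₀ := lt_min hδpos hδ₀pos
  have hδ'pos : 0 < δ' := by positivity
  have hδ'ltδ : δ' < δ := by
    have := min_le_left δ δ₀; simp only [hδ'def]; linarith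
  have hδ'ltδ₀ : δ' < δ₀ := by
    have := min_le_right δ δ₀; simp only [hδ'def]; linarith
  have hδ'le1δ₀ : δ' ≤ 1 - δ₀ := by linarith
  -- compact set K away from 0 and its max m < g 0
  set K : Set ℝ := Icc (-(1-δ₀)) (-δ') ∪ Icc δ' (1-δ₀) with hKdef
  have hKcomp : IsCompact K := (isCompact_Icc).union isCompact_Icc
  have hKne : K.Nonempty := ⟨δ', Or.inr ⟨le_refl _, hδ'le1δ₀⟩⟩
  obtain ⟨x₀, hx₀K, hx₀max⟩ := hKcomp.exists_isMaxOn hKne hgcont.continuousOn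
  set m := g x₀ with hmdef
  have hmnn : 0 ≤ m := hgnn x₀
  have hKlt : ∀ x ∈ K, g x < g 0 := by
    intro x hx
    rcases hx with hx | hx
    · obtain ⟨hx1, hx2⟩ := hx
      have h1 : x + 1 ∈ Ico (0:ℝ) 1 := ⟨by linarith, by linarith⟩
      have hne : x + 1 ≠ 0 := by intro h; rw [← eq_sub_iff_add_eq] at h; linarith
      have hge := hgmax (x+1)
      rcases lt_or_eq_of_le hge with h | h
      · rw [← hgper x]; exact h
      · exact absurd (hguniq _ h1 h) hne
    · obtain ⟨hx1, hx2⟩ := hx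
      have h1 : x ∈ Ico (0:ℝ) 1 := ⟨by linarith, by linarith⟩
      have hne : x ≠ 0 := by intro h; rw [h] at hx1; linarith
      rcases lt_or_eq_of_le (hgmax x) with h | h
      · exact h
      · exact absurd (hguniq _ h1 h) hne
  have hmlt : m < g 0 := hKlt x₀ hx₀K
  set t : ℝ := (m + g 0)/2 with htdef
  have htpos : 0 < t := by simp only [htdef]; linarith
  have hmt : m < t := by simp only [htdef]; linarith
  have htlt : t < g 0 := by simp only [htdef]; linarith
  -- neighborhood of 0 where g ≥ t
  obtain ⟨ρ, hρpos, hρ⟩ := Metric.continuousAt_iff.mp hgcont.continuousAt (g 0 - t) (by linarith)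
  set ρ' : ℝ := min (ρ/2) δ' with hρ'def
  have hρ'pos : 0 < ρ' := lt_min (by linarith) hδ'pos
  have hρ'leδ' : ρ' ≤ δ' := min_le_right _ _
  have hρ'ltρ : ρ' < ρ := lt_of_le_of_lt (min_le_left _ _) (by linarith)
  have hgt : ∀ x : ℝ, |x| ≤ ρ' → t ≤ g x := by
    intro x hx
    have hd : dist x 0 < ρ := by rw [Real.dist_eq, sub_zero]; linarith
    have h2 := hρ hd
    rw [Real.dist_eq] at h2
    have h3 := (abs_lt.mp h2).1
    linarith
  -- grid: uniform lower bound on measures of length-ρ' intervals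
  set N : ℕ := ⌈2/ρ'⌉₊ with hNdef
  have hNlb : 2/ρ' ≤ (N:ℝ) := Nat.le_ceil _
  have hNpos : 0 < N := Nat.ceil_pos.mpr (by positivity)
  have hNR : (0:ℝ) < N := Nat.cast_pos.mpr hNpos
  have hNρ' : 2 ≤ (N:ℝ) * ρ' := by rw [div_le_iff₀ hρ'pos] at hNlb; linarith
  have hgridpos : ∀ k ∈ Finset.range N, 0 < mu (Icc ((k:ℝ)/N) (((k:ℝ)+1)/N)) := by
    intro k hk
    have hkN : (k:ℝ) + 1 ≤ N := by exact_mod_cast Nat.succ_le_of_lt (Finset.mem_range.mp hk)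
    refine hsupp _ _ (by positivity) ((div_lt_div_iff_of_pos_right hNR).mpr (by linarith)) ?_
    rw [div_le_one hNR]; exact hkN
  have hNe : (Finset.range N).Nonempty := ⟨0, Finset.mem_range.mpr hNpos⟩
  set c : ENNReal := (Finset.range N).inf' hNe (fun k => mu (Icc ((k:ℝ)/N) (((k:ℝ)+1)/N)))
    with hcdef
  have hcpos : 0 < c := (Finset.lt_inf'_iff hNe).mpr hgridpos
  have hcne : c ≠ ⊤ := by
    have h := Finset.inf'_le (fun k : ℕ => mu (Icc ((k:ℝ)/N) (((k:ℝ)+1)/N)))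
      (Finset.mem_range.mpr hNpos)
    exact ne_top_of_le_ne_top (measure_ne_top mu _) h
  set c' : ℝ := c.toReal with hc'def
  have hc'pos : 0 < c' := ENNReal.toReal_pos hcpos.ne' hcne
  have hcover : ∀ s : ℝ, δ₀ ≤ s → s ≤ 1 - δ₀ → c' ≤ (mu (Icc s (s+ρ'))).toReal := by
    intro s hs1 hs2
    set k : ℕ := ⌈(N:ℝ)*s⌉₊ with hkdef
    have hk1 : (N:ℝ)*s ≤ k := Nat.le_ceil _
    have hk2 : (k:ℝ) < N*s + 1 := Nat.ceil_lt_add_one (mul_nonneg hNR.le (by linarith))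
    have hsub : Icc ((k:ℝ)/N) (((k:ℝ)+1)/N) ⊆ Icc s (s+ρ') := by
      apply Icc_subset_Icc
      · rw [le_div_iff₀ hNR]; nlinarith
      · rw [div_le_iff₀ hNR]; nlinarith
    have hkmem : k ∈ Finset.range N := by
      rw [Finset.mem_range]
      have hρδ : ρ' < δ₀ := lt_of_le_of_lt hρ'leδ' hδ'ltδ₀
      have hcast : (k:ℝ) < N := by nlinarith
      exact_mod_cast hcast
    have hle0 : c ≤ mu (Icc ((k:ℝ)/N) (((k:ℝ)+1)/N)) :=
      Finset.inf'_le (fun k : ℕ => mu (Icc ((k:ℝ)/N) (((k:ℝ)+1)/N))) hkmem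
    have hle : c ≤ mu (Icc s (s+ρ')) := le_trans hle0 (measure_mono hsub)
    exact (ENNReal.toReal_le_toReal hcne (measure_ne_top mu _)).mpr hle
  -- choice of a₀
  have hr1 : m/t < 1 := (div_lt_one htpos).mpr hmt
  have hr0 : 0 ≤ m/t := div_nonneg hmnn htpos.le
  have htend := tendsto_rpow_atTop_of_base_lt_one (m/t) (by linarith) hr1
  have hev : ∀ᶠ a : ℝ in Filter.atTop, (m/t)^a < ε * c' / 6 :=
    htend.eventually (gt_mem_nhds (by positivity))
  obtain ⟨a₁, ha₁⟩ := Filter.eventually_atTop.mp hev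
  refine ⟨max a₁ 1, ?_⟩
  intro a ha s hs
  obtain ⟨hs1, hs2⟩ := hs
  have ha1 : 1 ≤ a := le_trans (le_max_right _ _) ha
  have hapos : 0 < a := by linarith
  have haε : (m/t)^a < ε * c' / 6 := ha₁ a (le_trans (le_max_left _ _) ha)
  have hs0 : 0 ≤ s := by linarith
  have hs1' : s ≤ 1 := by linarith
  have hηs : s ∈ Icc (0:ℝ) 1 := ⟨hs0, hs1'⟩
  -- the unnormalized integrand q
  set q : ℝ → ℝ := fun lam => g (lam - s) ^ a with hqdef
  have hqcont : Continuous q := by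
    rw [continuous_iff_continuousAt]
    intro x
    exact (Real.continuousAt_rpow_const _ _ (Or.inr hapos.le)).comp
      ((hgcont.comp (continuous_sub_right s)).continuousAt)
  have hqnn : ∀ lam, 0 ≤ q lam := fun lam => Real.rpow_nonneg (hgnn _) a
  have hqInt : IntegrableOn q (Icc 0 1) mu :=
    hqcont.continuousOn.integrableOn_compact isCompact_Icc
  -- lower bound for the normalization Z
  have hZdef : gvmZ mu g s a = ∫ lam in Icc (0:ℝ) 1, q lam ∂mu := rfl
  have hsubI : Icc s (s+ρ') ⊆ Icc (0:ℝ) 1 :=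
    Icc_subset_Icc (by linarith) (by
      have : ρ' ≤ δ₀ := le_of_lt (lt_of_le_of_lt hρ'leδ' hδ'ltδ₀)
      linarith)
  have hstep1 : t^a * (mu (Icc s (s+ρ'))).toReal ≤ ∫ lam in Icc s (s+ρ'), q lam ∂mu := by
    have hconst : ∫ _lam in Icc s (s+ρ'), t^a ∂mu = (mu (Icc s (s+ρ'))).toReal • t^a :=
      setIntegral_const _
    have hmono : ∫ _lam in Icc s (s+ρ'), t^a ∂mu ≤ ∫ lam in Icc s (s+ρ'), q lam ∂mu := by
      refine setIntegral_mono_on (integrableOn_const (measure_ne_top mu _))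
        (hqInt.mono_set hsubI) measurableSet_Icc ?_
      intro x hx
      refine Real.rpow_le_rpow htpos.le (hgt _ ?_) hapos.le
      rw [abs_le]
      exact ⟨by linarith [hx.1], by linarith [hx.2]⟩
    rw [hconst, smul_eq_mul] at hmono
    linarith [hmono]
  have hstep2 : ∫ lam in Icc s (s+ρ'), q lam ∂mu ≤ gvmZ mu g s a := by
    rw [hZdef]
    exact setIntegral_mono_set hqInt (Filter.Eventually.of_forall hqnn)
      (HasSubset.Subset.eventuallyLE hsubI)
  have hZc : t^a * c' ≤ gvmZ mu g s a := by
    have h1 := hcover s hs1 hs2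
    have h2 : t^a * c' ≤ t^a * (mu (Icc s (s+ρ'))).toReal :=
      mul_le_mul_of_nonneg_left h1 (Real.rpow_nonneg htpos.le a)
    linarith
  have hZpos : 0 < gvmZ mu g s a := by
    refine lt_of_lt_of_le ?_ hZc
    have := Real.rpow_pos_of_pos htpos a
    positivity
  -- the normalized density
  set fm : ℝ → ℝ := gvmF mu g s a with hfmd
  have hfmdef : ∀ lam, fm lam = q lam / gvmZ mu g s a := fun _ => rfl
  have hfInt : IntegrableOn fm (Icc 0 1) mu := hqInt.div_const _
  have hfnn : ∀ lam, 0 ≤ fm lam := fun lam => div_nonneg (hqnn lam) hZpos.le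
  have hfmcont : Continuous fm := hqcont.div_const _
  have hf1 : ∫ lam in Icc (0:ℝ) 1, fm lam ∂mu = 1 := by
    have : ∫ lam in Icc (0:ℝ) 1, fm lam ∂mu
        = (∫ lam in Icc (0:ℝ) 1, q lam ∂mu) / gvmZ mu g s a := integral_div _ _
    rw [this, ← hZdef, div_self hZpos.ne']
  -- the far set
  set S : Set ℝ := {lam | δ' < |lam - s|} with hSdef
  have hSopen : IsOpen S := isOpen_lt continuous_const (continuous_abs.comp (continuous_sub_right s))
  have hSmeas : MeasurableSet S := hSopen.measurableSet
  have hfar : ∀ lam ∈ Icc (0:ℝ) 1 ∩ S, q lam ≤ m^a := by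
    rintro lam ⟨hlam, hlamS⟩
    have hgle : g (lam - s) ≤ m := by
      apply hx₀max
      have hS' : δ' < |lam - s| := hlamS
      rcases le_or_gt s lam with h | h
      · right
        rw [abs_of_nonneg (by linarith)] at hS'
        exact ⟨le_of_lt hS', by linarith [hlam.2]⟩
      · left
        rw [abs_of_neg (by linarith)] at hS'
        exact ⟨by linarith [hlam.1], by linarith⟩
    exact Real.rpow_le_rpow (hgnn _) hgle hapos.le
  have htailq : ∫ lam in Icc (0:ℝ) 1 ∩ S, q lam ∂mu ≤ m^a := by
    have h1 : ∫ lam in Icc (0:ℝ) 1 ∩ S, q lam ∂mu ≤ ∫ _lam in Icc (0:ℝ) 1 ∩ S, m^a ∂mu :=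
      setIntegral_mono_on (hqInt.mono_set inter_subset_left)
        (integrableOn_const (measure_ne_top mu _))
        (measurableSet_Icc.inter hSmeas) hfar
    have h2 : ∫ _lam in Icc (0:ℝ) 1 ∩ S, m^a ∂mu = (mu (Icc (0:ℝ) 1 ∩ S)).toReal • m^a :=
      setIntegral_const _
    have h3 : (mu (Icc (0:ℝ) 1 ∩ S)).toReal ≤ 1 := by
      have hle : mu (Icc (0:ℝ) 1 ∩ S) ≤ 1 := prob_le_one
      have := ENNReal.toReal_mono (by norm_num) hle
      simpa using this
    rw [h2, smul_eq_mul] at h1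
    nlinarith [Real.rpow_nonneg hmnn a]
  have htail : ∫ lam in Icc (0:ℝ) 1 ∩ S, fm lam ∂mu ≤ (m/t)^a / c' := by
    have heq : ∫ lam in Icc (0:ℝ) 1 ∩ S, fm lam ∂mu
        = (∫ lam in Icc (0:ℝ) 1 ∩ S, q lam ∂mu) / gvmZ mu g s a := integral_div _ _
    rw [heq, Real.div_rpow hmnn htpos.le, div_div]
    exact div_le_div₀ (Real.rpow_nonneg hmnn a) htailq
      (by have := Real.rpow_pos_of_pos htpos a; positivity) hZc
  -- key identity
  set Fv : ℝ → E3 := fun lam => fm lam • (η lam - η s) with hFv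
  have hscont : ContinuousOn (fun lam => η lam - η s) (Icc 0 1) := hηcont.sub continuousOn_const
  have hFvInt : IntegrableOn Fv (Icc 0 1) mu :=
    (hfmcont.continuousOn.smul hscont).integrableOn_compact isCompact_Icc
  have hIη : IntegrableOn (fun lam => fm lam • η lam) (Icc 0 1) mu :=
    (hfmcont.continuousOn.smul hηcont).integrableOn_compact isCompact_Icc
  have hIc : IntegrableOn (fun lam => fm lam • η s) (Icc 0 1) mu :=
    (hfmcont.continuousOn.smul continuousOn_const).integrableOn_compact isCompact_Icc
  have hkey : colorOf mu η fm - η s = ∫ lam in Icc (0:ℝ) 1, Fv lam ∂mu := by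
    have h1 : ∫ lam in Icc (0:ℝ) 1, Fv lam ∂mu
        = (∫ lam in Icc (0:ℝ) 1, fm lam • η lam ∂mu)
          - ∫ lam in Icc (0:ℝ) 1, fm lam • η s ∂mu := by
      rw [← integral_sub hIη hIc]
      apply integral_congr_ae
      filter_upwards with lam
      simp [hFv, smul_sub]
    have h2 : ∫ lam in Icc (0:ℝ) 1, fm lam • η s ∂mu = η s := by
      rw [integral_smul_const, hf1, one_smul]
    rw [h1, h2]
    rfl
  -- the distance function D
  set D : ℝ → ℝ := fun lam => norm1 (η lam - η s) with hDdef
  have hDcont : ContinuousOn D (Icc 0 1) := continuous_norm1.comp_continuousOn hscont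
  have hnorm1 : norm1 (∫ lam in Icc (0:ℝ) 1, Fv lam ∂mu)
      ≤ ∫ lam in Icc (0:ℝ) 1, fm lam * D lam ∂mu := by
    refine le_trans (norm1_integral_le hFvInt) (le_of_eq ?_)
    apply integral_congr_ae
    filter_upwards with lam
    rw [hFv]
    simp only
    rw [norm1_smul, abs_of_nonneg (hfnn lam)]
  -- pointwise bound
  have hbound : ∀ lam ∈ Icc (0:ℝ) 1,
      fm lam * D lam ≤ (ε/2) * fm lam + S.indicator (fun lam => 3 * fm lam) lam := by
    intro lam hlam
    by_cases hmem : lam ∈ S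
    · have hD3 : D lam ≤ 3 := norm1_sub_le_three _ _ (hηΔ lam hlam) (hηΔ s hηs)
      rw [Set.indicator_of_mem hmem]
      have h1 : fm lam * D lam ≤ fm lam * 3 := mul_le_mul_of_nonneg_left hD3 (hfnn lam)
      have h2 : 0 ≤ (ε/2) * fm lam := mul_nonneg (by linarith) (hfnn lam)
      linarith [h1, h2]
    · rw [Set.indicator_of_notMem hmem, add_zero]
      have hnear : |lam - s| ≤ δ' := le_of_not_gt hmem
      have hdist : dist lam s < δ := by rw [Real.dist_eq]; linarith
      have hηd := hδ lam hlam s hηs hdist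
      have hDle : D lam ≤ ε/2 := by
        have h3 := norm1_le_three_norm (η lam - η s)
        have h4 : ‖η lam - η s‖ = dist (η lam) (η s) := (dist_eq_norm _ _).symm
        rw [h4] at h3
        calc D lam ≤ 3 * dist (η lam) (η s) := h3
          _ ≤ ε/2 := by linarith
      calc fm lam * D lam ≤ fm lam * (ε/2) := mul_le_mul_of_nonneg_left hDle (hfnn lam)
        _ = (ε/2) * fm lam := by ring
  -- integrability pieces
  have hIind : Integrable (S.indicator (fun lam => 3 * fm lam)) (mu.restrict (Icc 0 1)) :=
    (hfInt.const_mul 3).indicator hSmeas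
  have hIfD : IntegrableOn (fun lam => fm lam * D lam) (Icc 0 1) mu :=
    (hfmcont.continuousOn.mul hDcont).integrableOn_compact isCompact_Icc
  -- final integral estimate
  have hfinal : ∫ lam in Icc (0:ℝ) 1, fm lam * D lam ∂mu ≤ ε/2 + 3 * ((m/t)^a / c') := by
    have h1 : ∫ lam in Icc (0:ℝ) 1, fm lam * D lam ∂mu
        ≤ ∫ lam in Icc (0:ℝ) 1,
            ((ε/2) * fm lam + S.indicator (fun lam => 3 * fm lam) lam) ∂mu :=
      setIntegral_mono_on hIfD ((hfInt.const_mul (ε/2)).add hIind) measurableSet_Icc hbound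
    have h2 : ∫ lam in Icc (0:ℝ) 1,
          ((ε/2) * fm lam + S.indicator (fun lam => 3 * fm lam) lam) ∂mu
        = (ε/2) * (∫ lam in Icc (0:ℝ) 1, fm lam ∂mu)
          + ∫ lam in Icc (0:ℝ) 1, S.indicator (fun lam => 3 * fm lam) lam ∂mu := by
      rw [integral_add (hfInt.const_mul (ε/2)) hIind, integral_const_mul]
    have h3 : ∫ lam in Icc (0:ℝ) 1, S.indicator (fun lam => 3 * fm lam) lam ∂mu
        = 3 * ∫ lam in Icc (0:ℝ) 1 ∩ S, fm lam ∂mu := by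
      rw [setIntegral_indicator hSmeas, integral_const_mul]
    rw [h2, h3, hf1] at h1
    have h4 : 3 * ∫ lam in Icc (0:ℝ) 1 ∩ S, fm lam ∂mu ≤ 3 * ((m/t)^a / c') := by
      linarith [htail]
    linarith
  -- conclusion
  have h6 : (m/t)^a / c' ≤ ε/6 := by
    rw [div_le_iff₀ hc'pos]
    nlinarith [haε]
  calc norm1 (colorOf mu η fm - η s)
      = norm1 (∫ lam in Icc (0:ℝ) 1, Fv lam ∂mu) := by rw [hkey]
    _ ≤ ∫ lam in Icc (0:ℝ) 1, fm lam * D lam ∂mu := hnorm1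
    _ ≤ ε/2 + 3 * ((m/t)^a / c') := hfinal
    _ ≤ ε := by linarith
end
end

section
/- Let F = {f_{s,a}} be the normalized von Mises family (h(λ) = cos(2πλ)). If f_{s,a} ≠ f_{s',a'} as functions on [0,1] (with a, a' ≥ 0, s, s' ∈ [0,1]), then the difference f_{s,a} − f_{s',a'} changes sign twice on [0,1]. -/
open MeasureTheory Set Real

noncomputable section

/-- `w` changes sign twice on `[0,1]` (w.r.t. the measure `mu`). -/
def changesSignTwice (mu : Measure ℝ) (w : ℝ → ℝ) : Prop :=
  0 < mu {lam | lam ∈ Icc (0:ℝ) 1 ∧ 0 < w lam} ∧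
  0 < mu {lam | lam ∈ Icc (0:ℝ) 1 ∧ w lam < 0} ∧
  ∃ a ∈ Icc (0:ℝ) 1, ∃ b ∈ Icc (0:ℝ) 1,
    (interior (cycIcc a b)).Nonempty ∧
    (interior (Icc (0:ℝ) 1 \ cycIcc a b)).Nonempty ∧
    (∀ lam ∈ cycIcc a b, 0 ≤ w lam) ∧
    (∀ lam ∈ Icc (0:ℝ) 1 \ cycIcc a b, w lam ≤ 0)

/-- The normalization constant `e^{-b(s,a)} = ∫_{[0,1]} e^{a cos(2π(λ-s))} dμ̃`. -/
def vmZ (mu : Measure ℝ) (s a : ℝ) : ℝ :=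
  ∫ lam in Icc (0:ℝ) 1, Real.exp (a * Real.cos (2 * π * (lam - s))) ∂mu

/-- The normalized von Mises density `f_{s,a}(λ) = e^{a cos(2π(λ-s)) + b(s,a)}`. -/
def vmF (mu : Measure ℝ) (s a : ℝ) : ℝ → ℝ :=
  fun lam => Real.exp (a * Real.cos (2 * π * (lam - s))) / vmZ mu s a

/- ===== auxiliary lemmas ===== -/

lemma myCos_ge {t z : ℝ} (hz : |z| ≤ t) (ht : t ≤ π) : Real.cos t ≤ Real.cos z := by
  rw [← Real.cos_abs z]
  exact Real.cos_le_cos_of_nonneg_of_le_pi (abs_nonneg z) ht hz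

lemma myCos_le {t z : ℝ} (ht : 0 ≤ t) (h1 : t ≤ |z|) (h2 : |z| ≤ 2*π - t) :
    Real.cos z ≤ Real.cos t := by
  rw [← Real.cos_abs z]
  rcases le_or_gt (|z|) π with h | h
  · exact Real.cos_le_cos_of_nonneg_of_le_pi ht h h1
  · rw [← Real.cos_two_pi_sub]
    exact Real.cos_le_cos_of_nonneg_of_le_pi ht (by linarith) (by linarith)

lemma mySub (x δ : ℝ) (hx0 : 0 ≤ x) (hx1 : x < 1) (hδ : 0 < δ) (hδ2 : δ ≤ 1/2) :
    ∃ c d : ℝ, 0 ≤ c ∧ c < d ∧ d ≤ 1 ∧ ∀ y ∈ Icc c d, |y - x| ≤ δ := by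
  rcases le_or_gt (x + δ) 1 with h | h
  · exact ⟨x, x + δ, hx0, by linarith, h,
      fun y hy => abs_le.2 ⟨by linarith [hy.1], by linarith [hy.2]⟩⟩
  · exact ⟨x - δ, x, by linarith, by linarith, by linarith,
      fun y hy => abs_le.2 ⟨by linarith [hy.1], by linarith [hy.2]⟩⟩

lemma myIntOn (mu : Measure ℝ) [IsProbabilityMeasure mu] (s a : ℝ) :
    IntegrableOn (fun lam => Real.exp (a * Real.cos (2 * π * (lam - s)))) (Icc 0 1) mu := by
  apply Continuous.integrableOn_Icc
  fun_prop

lemma myMuIcc (mu : Measure ℝ) [IsProbabilityMeasure mu] (hconc : mu (Icc (0:ℝ) 1)ᶜ = 0) :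
    mu (Icc (0:ℝ) 1) = 1 := by
  have h := measure_add_measure_compl (μ := mu) (measurableSet_Icc (a := (0:ℝ)) (b := 1))
  rw [hconc, add_zero] at h
  simpa using h

lemma vmZ_pos (mu : Measure ℝ) [IsProbabilityMeasure mu] (hconc : mu (Icc (0:ℝ) 1)ᶜ = 0)
    (s a : ℝ) : 0 < vmZ mu s a := by
  have hlow : ∀ x ∈ Icc (0:ℝ) 1, Real.exp (-|a|) ≤ Real.exp (a * Real.cos (2 * π * (x - s))) := by
    intro x _
    apply Real.exp_le_exp.mpr
    have h1 : |a * Real.cos (2 * π * (x - s))| ≤ |a| := by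
      rw [abs_mul]
      nlinarith [abs_nonneg a, Real.abs_cos_le_one (2 * π * (x - s))]
    linarith [neg_abs_le (a * Real.cos (2 * π * (x - s))), abs_le.mp h1]
  have h2 : Real.exp (-|a|) * (mu (Icc (0:ℝ) 1)).toReal ≤ vmZ mu s a := by
    have := setIntegral_mono_on (μ := mu) (s := Icc (0:ℝ) 1)
      (f := fun _ => Real.exp (-|a|))
      (g := fun lam => Real.exp (a * Real.cos (2 * π * (lam - s))))
      (integrableOn_const (measure_ne_top mu _)) (myIntOn mu s a)
      measurableSet_Icc hlow
    rw [setIntegral_const] at this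
    simpa [vmZ, mul_comm, measureReal_def] using this
  rw [myMuIcc mu hconc] at h2
  simp at h2
  calc (0:ℝ) < Real.exp (-|a|) := Real.exp_pos _
    _ ≤ vmZ mu s a := h2

lemma int_vmF (mu : Measure ℝ) [IsProbabilityMeasure mu] (hconc : mu (Icc (0:ℝ) 1)ᶜ = 0)
    (s a : ℝ) :
    ∫ lam in Icc (0:ℝ) 1, Real.exp (a * Real.cos (2 * π * (lam - s))) / vmZ mu s a ∂mu = 1 := by
  rw [integral_div, ← vmZ]
  exact div_self (ne_of_gt (vmZ_pos mu hconc s a))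

lemma myZero (mu : Measure ℝ)
    (hsupp : ∀ a b : ℝ, 0 ≤ a → a < b → b ≤ 1 → 0 < mu (Icc a b))
    (w : ℝ → ℝ) (hint : IntegrableOn w (Icc 0 1) mu)
    (h0 : ∫ lam in Icc (0:ℝ) 1, w lam ∂mu = 0)
    (hnn : ∀ lam, 0 ≤ w lam)
    (c d : ℝ) (hc : 0 ≤ c) (hcd : c < d) (hd : d ≤ 1)
    (hpos : ∀ lam ∈ Icc c d, 0 < w lam) : False := by
  have hae : w =ᵐ[mu.restrict (Icc 0 1)] 0 :=
    (integral_eq_zero_iff_of_nonneg_ae (Filter.Eventually.of_forall hnn) hint).mp h0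
  have hzero : mu.restrict (Icc 0 1) {x | w x ≠ 0} = 0 := by
    have := ae_iff.mp hae
    simpa using this
  have hsub : Icc c d ⊆ {x | w x ≠ 0} := fun x hx => ne_of_gt (hpos x hx)
  have h1 : mu.restrict (Icc 0 1) (Icc c d) = 0 := measure_mono_null hsub hzero
  rw [Measure.restrict_apply' measurableSet_Icc,
    inter_eq_left.mpr (Icc_subset_Icc hc hd)] at h1
  exact absurd (hsupp c d hc hcd hd) (by rw [h1]; simp)


set_option maxHeartbeats 2000000 in
/-- two distinct normalized von Mises densities differ by a function that changes
sign twice on `[0,1]`. -/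
theorem von_mises_difference_changes_sign_twice
    (mu : Measure ℝ) (hprob : IsProbabilityMeasure mu)
    (hconc : mu (Icc (0:ℝ) 1)ᶜ = 0)
    (hsupp : ∀ a b : ℝ, 0 ≤ a → a < b → b ≤ 1 → 0 < mu (Icc a b))
    (s s' a a' : ℝ) (hs : s ∈ Icc (0:ℝ) 1) (hs' : s' ∈ Icc (0:ℝ) 1)
    (ha : 0 ≤ a) (ha' : 0 ≤ a')
    (hne : ¬ ∀ lam ∈ Icc (0:ℝ) 1, vmF mu s a lam = vmF mu s' a' lam) :
    changesSignTwice mu (vmF mu s a - vmF mu s' a') := by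
  have hZ : 0 < vmZ mu s a := vmZ_pos mu hconc s a
  have hZ' : 0 < vmZ mu s' a' := vmZ_pos mu hconc s' a'
  have h2π : (0:ℝ) < 2*π := by positivity
  set w : ℝ → ℝ := vmF mu s a - vmF mu s' a' with hw
  set C : ℝ := Real.log (vmZ mu s' a') - Real.log (vmZ mu s a) with hCdef
  set g : ℝ → ℝ := fun lam =>
    a * Real.cos (2*π*(lam - s)) - a' * Real.cos (2*π*(lam - s')) + C with hgdef
  have hwg : ∀ lam, w lam =
      Real.exp (a * Real.cos (2*π*(lam - s)) - Real.log (vmZ mu s a)) -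
      Real.exp (a' * Real.cos (2*π*(lam - s')) - Real.log (vmZ mu s' a')) := by
    intro lam
    simp only [hw, Pi.sub_apply, vmF, Real.exp_sub, Real.exp_log hZ, Real.exp_log hZ']
  have hpos : ∀ lam, 0 < g lam → 0 < w lam := by
    intro lam h
    rw [hwg lam, sub_pos]
    apply Real.exp_lt_exp.mpr
    simp only [hgdef, hCdef] at h
    linarith
  have hneg : ∀ lam, g lam < 0 → w lam < 0 := by
    intro lam h
    rw [hwg lam, sub_neg]
    apply Real.exp_lt_exp.mpr
    simp only [hgdef, hCdef] at h
    linarith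
  have hge : ∀ lam, 0 ≤ g lam → 0 ≤ w lam := by
    intro lam h
    rw [hwg lam, sub_nonneg]
    apply Real.exp_le_exp.mpr
    simp only [hgdef, hCdef] at h
    linarith
  have hle : ∀ lam, g lam ≤ 0 → w lam ≤ 0 := by
    intro lam h
    rw [hwg lam, sub_nonpos]
    apply Real.exp_le_exp.mpr
    simp only [hgdef, hCdef] at h
    linarith
  set A : ℝ := a * Real.cos (2*π*s) - a' * Real.cos (2*π*s') with hAdef
  set B : ℝ := a * Real.sin (2*π*s) - a' * Real.sin (2*π*s') with hBdef
  have hexpand : ∀ lam, g lam = A * Real.cos (2*π*lam) + B * Real.sin (2*π*lam) + C := by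
    intro lam
    simp only [hgdef, hAdef, hBdef]
    rw [show 2*π*(lam - s) = 2*π*lam - 2*π*s by ring, Real.cos_sub,
        show 2*π*(lam - s') = 2*π*lam - 2*π*s' by ring, Real.cos_sub]
    ring
  by_cases hAB : A = 0 ∧ B = 0
  · exfalso
    apply hne
    have h1 := hAB.1
    have h2 := hAB.2
    rw [hAdef] at h1
    rw [hBdef] at h2
    have heq : ∀ x : ℝ, a * Real.cos (2*π*(x - s)) = a' * Real.cos (2*π*(x - s')) := by
      intro x
      rw [show 2*π*(x - s) = 2*π*x - 2*π*s by ring, Real.cos_sub,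
          show 2*π*(x - s') = 2*π*x - 2*π*s' by ring, Real.cos_sub]
      linear_combination Real.cos (2*π*x) * h1 + Real.sin (2*π*x) * h2
    have hZZ : vmZ mu s a = vmZ mu s' a' := by
      unfold vmZ
      exact integral_congr_ae (Filter.Eventually.of_forall fun x => congrArg Real.exp (heq x))
    intro lam _
    unfold vmF
    rw [heq lam, hZZ]
  -- nondegenerate case
  have hz0 : (⟨A, B⟩ : ℂ) ≠ 0 := by
    intro hz
    apply hAB
    have h1 := congrArg Complex.re hz
    have h2 := congrArg Complex.im hz
    simp at h1 h2
    exact ⟨h1, h2⟩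
  set R : ℝ := ‖(⟨A, B⟩ : ℂ)‖ with hRdef
  have hR : 0 < R := norm_pos_iff.mpr hz0
  have hcosθ : Real.cos ((⟨A,B⟩:ℂ).arg) = A / R := by simpa using Complex.cos_arg hz0
  have hsinθ : Real.sin ((⟨A,B⟩:ℂ).arg) = B / R := by simpa using Complex.sin_arg (⟨A,B⟩:ℂ)
  set φ : ℝ := (⟨A,B⟩:ℂ).arg / (2*π) with hφdef
  have hθφ : (⟨A,B⟩:ℂ).arg = 2*π*φ := by
    rw [hφdef]
    field_simp
  have hRcos : ∀ lam, g lam = R * Real.cos (2*π*(lam - φ)) + C := by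
    intro lam
    rw [hexpand lam, show 2*π*(lam-φ) = 2*π*lam - (⟨A,B⟩:ℂ).arg by rw [hθφ]; ring,
      Real.cos_sub, hcosθ, hsinθ]
    field_simp
  have hper : ∀ (x : ℝ) (m : ℤ), Real.cos (2*π*(x + (m:ℝ))) = Real.cos (2*π*x) := by
    intro x m
    rw [show 2*π*(x + (m:ℝ)) = 2*π*x + (m:ℝ)*(2*π) by ring]
    exact Real.cos_add_int_mul_two_pi _ m
  have hIf : IntegrableOn (vmF mu s a) (Icc 0 1) mu := by
    exact (myIntOn mu s a).div_const (vmZ mu s a)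
  have hIf' : IntegrableOn (vmF mu s' a') (Icc 0 1) mu := by
    exact (myIntOn mu s' a').div_const (vmZ mu s' a')
  have hIntw : IntegrableOn w (Icc 0 1) mu := hIf.sub hIf'
  have hvm1 : ∫ lam in Icc (0:ℝ) 1, vmF mu s a lam ∂mu = 1 := by
    simpa [vmF] using int_vmF mu hconc s a
  have hvm2 : ∫ lam in Icc (0:ℝ) 1, vmF mu s' a' lam ∂mu = 1 := by
    simpa [vmF] using int_vmF mu hconc s' a'
  have hint0 : ∫ lam in Icc (0:ℝ) 1, w lam ∂mu = 0 := by
    simp only [hw, Pi.sub_apply]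
    rw [integral_sub hIf hIf', hvm1, hvm2, sub_self]
  clear_value w C g A B R φ
  -- exclude C ≥ R
  rcases le_or_gt R C with hRC | hRC
  · exfalso
    have hnn : ∀ lam, 0 ≤ w lam := by
      intro lam
      apply hge lam
      rw [hRcos lam]
      nlinarith [Real.neg_one_le_cos (2*π*(lam - φ)), hR]
    obtain ⟨c, d, hc, hcd, hd, hI⟩ := mySub (Int.fract φ) (1/8) (Int.fract_nonneg _)
      (Int.fract_lt_one _) (by norm_num) (by norm_num)
    refine myZero mu hsupp w hIntw hint0 hnn c d hc hcd hd ?_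
    intro y hyI
    apply hpos
    have habs := abs_le.mp (hI y hyI)
    have hid : Real.cos (2*π*(y - φ)) = Real.cos (2*π*(y - Int.fract φ)) := by
      rw [show y - φ = (y - Int.fract φ) + ((-⌊φ⌋ : ℤ) : ℝ) by
        push_cast; linarith [Int.self_sub_floor φ]]
      exact hper _ _
    rw [hRcos y, hid]
    have hcnn : 0 ≤ Real.cos (2*π*(y - Int.fract φ)) := by
      apply Real.cos_nonneg_of_mem_Icc
      constructor
      · nlinarith [Real.pi_pos]
      · nlinarith [Real.pi_pos]
    nlinarith [hR]
  -- exclude C ≤ -R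
  rcases le_or_gt C (-R) with hCR | hCR
  · exfalso
    have hnp : ∀ lam, w lam ≤ 0 := by
      intro lam
      apply hle lam
      rw [hRcos lam]
      nlinarith [Real.cos_le_one (2*π*(lam - φ)), hR]
    obtain ⟨c, d, hc, hcd, hd, hI⟩ := mySub (Int.fract (φ + 1/2)) (1/8) (Int.fract_nonneg _)
      (Int.fract_lt_one _) (by norm_num) (by norm_num)
    refine myZero mu hsupp (fun lam => -(w lam)) hIntw.neg (by rw [integral_neg, hint0, neg_zero])
      (fun lam => neg_nonneg.mpr (hnp lam)) c d hc hcd hd ?_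
    intro y hyI
    rw [neg_pos]
    apply hneg
    have habs := abs_le.mp (hI y hyI)
    have hid : Real.cos (2*π*(y - φ)) = -Real.cos (2*π*(y - Int.fract (φ + 1/2))) := by
      rw [show y - φ = (y - Int.fract (φ + 1/2) + 1/2) + ((-⌊φ + 1/2⌋ : ℤ) : ℝ) by
        push_cast; linarith [Int.self_sub_floor (φ + 1/2)]]
      rw [hper, show 2*π*(y - Int.fract (φ + 1/2) + 1/2) = 2*π*(y - Int.fract (φ + 1/2)) + π by
        ring, Real.cos_add_pi]
    rw [hRcos y, hid]
    have hcnn : 0 ≤ Real.cos (2*π*(y - Int.fract (φ + 1/2))) := by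
      apply Real.cos_nonneg_of_mem_Icc
      constructor
      · nlinarith [Real.pi_pos]
      · nlinarith [Real.pi_pos]
    nlinarith [hR]
  -- main case: -R < C < R
  set t := Real.arccos (-C/R) with htdef
  have hb1 : -1 ≤ -C/R := by
    rw [le_div_iff₀ hR]
    linarith
  have hb2 : -C/R ≤ 1 := (div_le_one hR).mpr (by linarith)
  have ht0 : 0 < t := Real.arccos_pos.mpr (by rw [div_lt_one hR]; linarith)
  have htπ : t < π := by
    refine lt_of_le_of_ne (Real.arccos_le_pi _) fun h => ?_
    have := Real.arccos_eq_pi.mp h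
    have : -C/R < -1 → False := fun hh => absurd hb1 (not_le.mpr hh)
    rw [le_div_iff₀ hR] at hb1
    have h' := Real.arccos_eq_pi.mp h
    rw [div_le_iff₀ hR] at h'
    nlinarith
  have hcost : Real.cos t = -C/R := Real.cos_arccos hb1 hb2
  have hRt : R * Real.cos t + C = 0 := by
    rw [hcost]
    field_simp
    ring
  set τ := t/(2*π) with hτdef
  have hτ0 : 0 < τ := div_pos ht0 h2π
  have hτh : τ < 1/2 := by
    rw [hτdef, div_lt_iff₀ h2π]
    linarith
  have h2πτ : 2*π*τ = t := by
    rw [hτdef]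
    field_simp
  set α := Int.fract (φ - τ) with hαdef
  have hα0 : 0 ≤ α := Int.fract_nonneg _
  have hα1 : α < 1 := Int.fract_lt_one _
  clear_value t τ α
  have hcosrep : ∀ lam : ℝ, Real.cos (2*π*(lam - φ)) = Real.cos (2*π*(lam - α - τ)) := by
    intro lam
    rw [show lam - φ = (lam - α - τ) + ((-⌊φ - τ⌋ : ℤ) : ℝ) by
      rw [hαdef]; push_cast; linarith [Int.self_sub_floor (φ - τ)]]
    exact hper _ _
  have habs2π : ∀ u : ℝ, |2*π*u| = 2*π*|u| := by
    intro u
    rw [abs_mul, abs_of_pos h2π]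
  have hg_ge : ∀ lam : ℝ, |lam - α - τ| ≤ τ → 0 ≤ g lam := by
    intro lam h
    rw [hRcos lam, hcosrep lam]
    have h1 : Real.cos t ≤ Real.cos (2*π*(lam - α - τ)) := by
      apply myCos_ge _ htπ.le
      rw [habs2π]
      calc 2*π*|lam - α - τ| ≤ 2*π*τ := by nlinarith
        _ = t := h2πτ
    nlinarith [hR]
  have hg_ge' : ∀ lam : ℝ, |lam - α - τ + 1| ≤ τ → 0 ≤ g lam := by
    intro lam h
    rw [hRcos lam, hcosrep lam]
    have hcos1 : Real.cos (2*π*(lam - α - τ + 1)) = Real.cos (2*π*(lam - α - τ)) := by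
      rw [show lam - α - τ + 1 = (lam - α - τ) + ((1 : ℤ) : ℝ) by push_cast; ring]
      exact hper _ _
    rw [← hcos1]
    have h1 : Real.cos t ≤ Real.cos (2*π*(lam - α - τ + 1)) := by
      apply myCos_ge _ htπ.le
      rw [habs2π]
      calc 2*π*|lam - α - τ + 1| ≤ 2*π*τ := by nlinarith
        _ = t := h2πτ
    nlinarith [hR]
  have hg_le : ∀ lam : ℝ, τ ≤ |lam - α - τ| → |lam - α - τ| ≤ 1 - τ → g lam ≤ 0 := by
    intro lam h1 h2
    rw [hRcos lam, hcosrep lam]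
    have h3 : Real.cos (2*π*(lam - α - τ)) ≤ Real.cos t := by
      apply myCos_le ht0.le
      · rw [habs2π]
        calc t = 2*π*τ := h2πτ.symm
          _ ≤ 2*π*|lam - α - τ| := by nlinarith
      · rw [habs2π]
        calc 2*π*|lam - α - τ| ≤ 2*π*(1-τ) := by nlinarith
          _ = 2*π - t := by rw [← h2πτ]; ring
    nlinarith [hR]
  -- positive measure of the positivity set
  have hmpos : 0 < mu {lam | lam ∈ Icc (0:ℝ) 1 ∧ 0 < w lam} := by
    obtain ⟨c, d, hc, hcd, hd, hI⟩ := mySub (Int.fract φ) (τ/2) (Int.fract_nonneg _)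
      (Int.fract_lt_one _) (by linarith) (by linarith)
    refine lt_of_lt_of_le (hsupp c d hc hcd hd) (measure_mono ?_)
    intro y hy
    refine ⟨⟨le_trans hc hy.1, le_trans hy.2 hd⟩, ?_⟩
    apply hpos
    have habs := abs_le.mp (hI y hy)
    have hid : Real.cos (2*π*(y - φ)) = Real.cos (2*π*(y - Int.fract φ)) := by
      rw [show y - φ = (y - Int.fract φ) + ((-⌊φ⌋ : ℤ) : ℝ) by
        push_cast; linarith [Int.self_sub_floor φ]]
      exact hper _ _
    rw [hRcos y, hid]
    have h1 : Real.cos t < Real.cos (2*π*(y - Int.fract φ)) := by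
      calc Real.cos t < Real.cos (t/2) :=
            Real.cos_lt_cos_of_nonneg_of_le_pi (by linarith) htπ.le (by linarith)
        _ ≤ Real.cos (2*π*(y - Int.fract φ)) := by
            apply myCos_ge _ (by linarith)
            rw [habs2π]
            calc 2*π*|y - Int.fract φ| ≤ 2*π*(τ/2) := by
                  have := abs_le.mpr habs
                  nlinarith
              _ = t/2 := by rw [show 2*π*(τ/2) = (2*π*τ)/2 by ring, h2πτ]
    nlinarith [hR]
  -- positive measure of the negativity set
  have hmneg : 0 < mu {lam | lam ∈ Icc (0:ℝ) 1 ∧ w lam < 0} := by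
    have hδ0 : 0 < (1/2 - τ)/2 := by linarith
    obtain ⟨c, d, hc, hcd, hd, hI⟩ := mySub (Int.fract (φ + 1/2)) ((1/2 - τ)/2)
      (Int.fract_nonneg _) (Int.fract_lt_one _) hδ0 (by linarith)
    refine lt_of_lt_of_le (hsupp c d hc hcd hd) (measure_mono ?_)
    intro y hy
    refine ⟨⟨le_trans hc hy.1, le_trans hy.2 hd⟩, ?_⟩
    apply hneg
    have habs := abs_le.mp (hI y hy)
    have hid : Real.cos (2*π*(y - φ)) = -Real.cos (2*π*(y - Int.fract (φ + 1/2))) := by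
      rw [show y - φ = (y - Int.fract (φ + 1/2) + 1/2) + ((-⌊φ + 1/2⌋ : ℤ) : ℝ) by
        push_cast; linarith [Int.self_sub_floor (φ + 1/2)]]
      rw [hper, show 2*π*(y - Int.fract (φ + 1/2) + 1/2) = 2*π*(y - Int.fract (φ + 1/2)) + π by
        ring, Real.cos_add_pi]
    rw [hRcos y, hid]
    have h1 : Real.cos (π - t) < Real.cos (2*π*(y - Int.fract (φ + 1/2))) := by
      calc Real.cos (π - t) < Real.cos (2*π*((1/2 - τ)/2)) := by
            apply Real.cos_lt_cos_of_nonneg_of_le_pi (by nlinarith [Real.pi_pos]) (by linarith)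
            nlinarith [Real.pi_pos, h2πτ]
        _ ≤ Real.cos (2*π*(y - Int.fract (φ + 1/2))) := by
            apply myCos_ge _ (by nlinarith [Real.pi_pos])
            rw [habs2π]
            have := abs_le.mpr habs
            nlinarith [Real.pi_pos]
    rw [Real.cos_pi_sub] at h1
    nlinarith [hR]
  refine ⟨hmpos, hmneg, ?_⟩
  rcases lt_or_ge (α + 2*τ) 1 with hcase | hcase
  · -- non-wrapping arc
    have hCyc : cycIcc α (α + 2*τ) = Icc α (α + 2*τ) := if_pos (by linarith)
    refine ⟨α, ⟨hα0, hα1.le⟩, α + 2*τ, ⟨by linarith, hcase.le⟩, ?_, ?_, ?_, ?_⟩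
    · rw [hCyc, interior_Icc]
      exact ⟨α + τ, by constructor <;> linarith⟩
    · rw [hCyc]
      have hs1 : Ioo (α + 2*τ) 1 ⊆ Icc (0:ℝ) 1 \ Icc α (α + 2*τ) := by
        intro y hy
        exact ⟨⟨by linarith [hy.1], hy.2.le⟩, fun hmem => absurd hmem.2 (not_le.mpr hy.1)⟩
      exact ⟨(α + 2*τ + 1)/2, interior_maximal hs1 isOpen_Ioo ⟨by linarith, by linarith⟩⟩
    · intro lam hlam
      rw [hCyc] at hlam
      exact hge lam (hg_ge lam (abs_le.mpr ⟨by linarith [hlam.1], by linarith [hlam.2]⟩))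
    · intro lam hlam
      rw [hCyc] at hlam
      obtain ⟨⟨h01, h02⟩, hnot⟩ := hlam
      apply hle
      rcases lt_or_ge lam α with hl | hl
      · apply hg_le lam
        · rw [abs_of_nonpos (by linarith)]
          linarith
        · rw [abs_of_nonpos (by linarith)]
          linarith
      · have hgt : α + 2*τ < lam := by
          by_contra hle2
          push_neg at hle2
          exact hnot ⟨hl, hle2⟩
        apply hg_le lam
        · rw [abs_of_nonneg (by linarith)]
          linarith
        · rw [abs_of_nonneg (by linarith)]
          linarith
  · -- wrapping arc
    have hb0 : 0 ≤ α + 2*τ - 1 := by linarith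
    have hba : α + 2*τ - 1 < α := by linarith
    have hCyc : cycIcc α (α + 2*τ - 1) = Icc α 1 ∪ Icc 0 (α + 2*τ - 1) :=
      if_neg (not_le.mpr hba)
    refine ⟨α, ⟨hα0, hα1.le⟩, α + 2*τ - 1, ⟨hb0, by linarith⟩, ?_, ?_, ?_, ?_⟩
    · rw [hCyc]
      have hs1 : Ioo α 1 ⊆ Icc α 1 ∪ Icc 0 (α + 2*τ - 1) :=
        fun y hy => Or.inl ⟨hy.1.le, hy.2.le⟩
      exact ⟨(α + 1)/2, interior_maximal hs1 isOpen_Ioo ⟨by linarith, by linarith⟩⟩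
    · rw [hCyc]
      have hs1 : Ioo (α + 2*τ - 1) α ⊆ Icc (0:ℝ) 1 \ (Icc α 1 ∪ Icc 0 (α + 2*τ - 1)) := by
        intro y hy
        refine ⟨⟨by linarith [hy.1], by linarith [hy.2]⟩, ?_⟩
        rintro (h | h)
        · linarith [hy.2, h.1]
        · linarith [hy.1, h.2]
      exact ⟨(α + (α + 2*τ - 1))/2, interior_maximal hs1 isOpen_Ioo ⟨by linarith, by linarith⟩⟩
    · intro lam hlam
      rw [hCyc] at hlam
      apply hge
      rcases hlam with h | h
      · exact hg_ge lam (abs_le.mpr ⟨by linarith [h.1], by linarith [h.2]⟩)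
      · exact hg_ge' lam (abs_le.mpr ⟨by linarith [h.1], by linarith [h.2]⟩)
    · intro lam hlam
      rw [hCyc] at hlam
      obtain ⟨⟨h01, h02⟩, hnot⟩ := hlam
      have h1 : lam < α := by
        by_contra h
        push_neg at h
        exact hnot (Or.inl ⟨h, h02⟩)
      have h2 : α + 2*τ - 1 < lam := by
        by_contra h
        push_neg at h
        exact hnot (Or.inr ⟨h01, h⟩)
      apply hle
      apply hg_le lam
      · rw [abs_of_nonpos (by linarith)]
        linarith
      · rw [abs_of_nonpos (by linarith)]
        linarith
end
end

section
/- Assume the spectral locus is convex. Then for every c ∈ int T and every continuous monotone angle function θ_c : [0,1] → ℝ as in the definition of convexity, the total swept angle satisfies |θ_c(1) − θ_c(0)| > π. -/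
open MeasureTheory Set Real

noncomputable section

/-! If the swept angle were at most `π`, every direction `η(λ) - c` would make an angle of at
most `π/2` with the direction `w` of the mean angle `(θ(0) + θ(1))/2`. Then all of `η([0,1])`,
hence its convex hull `T`, lies in the half-plane `⟪w, x - c⟫ ≥ 0`, which has `c` on its
boundary line; but `c` is interior to `T` in `A` and `w` is parallel to `A`, so `c - t w ∈ T`
for small `t > 0`. -/

open Filter Topology
open scoped RealInnerProductSpace

theorem inner_cos_smul_add_sin_smul {F : Type*} [NormedAddCommGroup F] [InnerProductSpace ℝ F]
    {u v : F} (hu : ‖u‖ = 1) (hv : ‖v‖ = 1) (huv : ⟪u, v⟫ = 0) (a b : ℝ) :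
    ⟪cos a • u + sin a • v, cos b • u + sin b • v⟫ = cos (a - b) := by
  have hvu : ⟪v, u⟫ = 0 := by rw [real_inner_comm, huv]
  simp only [inner_add_left, inner_add_right, real_inner_smul_left, real_inner_smul_right,
    real_inner_self_eq_norm_sq, hu, hv, huv, hvu, cos_sub]
  ring

theorem abs_sub_midpoint_le_of_monotoneOn_or_antitoneOn {f : ℝ → ℝ} {a b x : ℝ}
    (hf : MonotoneOn f (Icc a b) ∨ AntitoneOn f (Icc a b)) (hx : x ∈ Icc a b) :
    |f x - (f a + f b) / 2| ≤ |f b - f a| / 2 := by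
  have ha : a ∈ Icc a b := left_mem_Icc.2 (hx.1.trans hx.2)
  have hb : b ∈ Icc a b := right_mem_Icc.2 (hx.1.trans hx.2)
  have h₁ := le_abs_self (f b - f a)
  have h₂ := neg_abs_le (f b - f a)
  rcases hf with hf | hf <;>
  · have := hf ha hx hx.1
    have := hf hx hb hx.2
    rw [abs_le]; constructor <;> linarith

theorem exists_mem_inner_lt_of_mem_intA {s : Set E3} {c w : E3} (hc : c ∈ intA s)
    (hw : w ≠ 0) (hw0 : w 0 + w 1 + w 2 = 0) : ∃ x ∈ s, ⟪w, x⟫ < ⟪w, c⟫ := by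
  obtain ⟨hcA, U, hU, hcU, hUs⟩ := hc
  have hlim : Tendsto (fun t : ℝ => c - t • w) (𝓝[>] 0) (𝓝 c) :=
    ((by fun_prop : Continuous fun t : ℝ => c - t • w).tendsto' 0 c (by simp)).mono_left
      nhdsWithin_le_nhds
  obtain ⟨t, htU, ht⟩ := ((hlim.eventually (hU.mem_nhds hcU)).and self_mem_nhdsWithin).exists
  have htA : c - t • w ∈ planeA := by
    have hcA : c 0 + c 1 + c 2 = 1 := hcA
    change (c - t • w) 0 + (c - t • w) 1 + (c - t • w) 2 = 1
    simp only [PiLp.sub_apply, PiLp.smul_apply, smul_eq_mul]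
    linear_combination hcA - t * hw0
  refine ⟨c - t • w, hUs ⟨htU, htA⟩, ?_⟩
  have : 0 < t * ‖w‖ ^ 2 := mul_pos ht (by positivity)
  rw [inner_sub_right, real_inner_smul_right, real_inner_self_eq_norm_sq]
  linarith

theorem total_swept_angle_gt_pi_general
    (η : ℝ → E3)
    (u v : E3) (hu : ‖u‖ = 1) (hv : ‖v‖ = 1) (huv : (inner ℝ u v : ℝ) = 0)
    (hu0 : u 0 + u 1 + u 2 = 0) (hv0 : v 0 + v 1 + v 2 = 0)
    (c : E3) (hc : c ∈ intA (colorTri η))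
    (θ : ℝ → ℝ)
    (hθmono : MonotoneOn θ (Icc 0 1) ∨ AntitoneOn θ (Icc 0 1))
    (hθrep : ∀ lam ∈ Icc (0:ℝ) 1,
      η lam - c = ‖η lam - c‖ • (Real.cos (θ lam) • u + Real.sin (θ lam) • v)) :
    π < |θ 1 - θ 0| := by
  by_contra! hle
  set φ := (θ 0 + θ 1) / 2
  set w : E3 := cos φ • u + sin φ • v
  have hT : colorTri η ⊆ {x | ⟪w, c⟫ ≤ ⟪w, x⟫} := by
    refine convexHull_min ?_ (convex_halfSpace_ge (innerₗ E3 w).isLinear _)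
    rintro _ ⟨lam, hlam, rfl⟩
    have hnear : |θ lam - φ| ≤ π / 2 :=
      (abs_sub_midpoint_le_of_monotoneOn_or_antitoneOn hθmono hlam).trans (by linarith)
    have hcos : 0 ≤ cos (φ - θ lam) := cos_nonneg_of_mem_Icc <| by
      rw [abs_le] at hnear; constructor <;> linarith
    have : 0 ≤ ⟪w, η lam - c⟫ := by
      rw [hθrep lam hlam, real_inner_smul_right, inner_cos_smul_add_sin_smul hu hv huv]
      positivity
    rwa [inner_sub_right, sub_nonneg] at this
  have hww : ⟪w, w⟫ = 1 := by simpa using inner_cos_smul_add_sin_smul hu hv huv φ φ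
  have hw : w ≠ 0 := fun h0 => by simp [h0] at hww
  have hw0 : w 0 + w 1 + w 2 = 0 := by
    simp only [w, PiLp.add_apply, PiLp.smul_apply, smul_eq_mul]
    linear_combination cos φ * hu0 + sin φ * hv0
  obtain ⟨x, hx, hlt⟩ := exists_mem_inner_lt_of_mem_intA hc hw hw0
  exact (hT hx).not_gt hlt

/-- if the spectral locus is convex, then for every interior point `c` of the
color triangle and every admissible angle function `θ` the total swept angle exceeds `π`. -/
theorem total_swept_angle_gt_pi
    (η : ℝ → E3) (hηcont : ContinuousOn η (Icc 0 1))
    (hηΔ : ∀ lam ∈ Icc (0:ℝ) 1, η lam ∈ simplex2)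
    (u v : E3) (hu : ‖u‖ = 1) (hv : ‖v‖ = 1) (huv : (inner ℝ u v : ℝ) = 0)
    (hu0 : u 0 + u 1 + u 2 = 0) (hv0 : v 0 + v 1 + v 2 = 0)
    (hTint : (intA (colorTri η)).Nonempty)
    (hconv : IsConvexLocus η u v)
    (c : E3) (hc : c ∈ intA (colorTri η))
    (θ : ℝ → ℝ)
    (hθcont : ContinuousOn θ (Icc 0 1))
    (hθmono : MonotoneOn θ (Icc 0 1) ∨ AntitoneOn θ (Icc 0 1))
    (hθ2π : |θ 1 - θ 0| ≤ 2 * π)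
    (hθrep : ∀ lam ∈ Icc (0:ℝ) 1,
      η lam - c = ‖η lam - c‖ • (Real.cos (θ lam) • u + Real.sin (θ lam) • v)) :
    π < |θ 1 - θ 0| :=
  total_swept_angle_gt_pi_general η u v hu hv huv hu0 hv0 c hc θ hθmono hθrep
end
end
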